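/- arXiv:1710.08240 — 9 statements merged into one kernel-verified Lean document; each statement's English description precedes it below -/
import Mathlib

section
/- Let μ be a Borel probability measure on ℝ and let ε > 0 be such that α := ∫_ℝ exp(ε x²) dμ(x) < ∞ (i.e. x ↦ exp(ε x²) is μ-integrable). Then for every t ≥ 36·log(2α)/ε, the function f_{μ,t}(x) = ∫_ℝ exp(-(x-y)²/(2t)) dμ(y) is unimodal; consequently the convolution μ * N(0,t) is unimodal for all such t. -/
/-!
Write `K(x, y) = exp (-(x - y)² / (2t))` and `f = ∫ K(·, y) dμ(y)`, so that
`t f'(x) = ∫ (y - x) K(x, y) dμ(y)`. Choose `r ≥ 0` with `exp (ε r²) = 2α`; by Markov's inequality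
`[-r, r]` carries mass at least `1/2`. Since `t ≥ 36 r²`, this mass dominates the contribution of
the tails, which is controlled by `α`, so `f' > 0` on `(-∞, -5r]` and `f' < 0` on `[5r, ∞)`.
At a critical point `x` we therefore have `|x| < 5r`, hence `∫ K(x, ·) dμ ≥ 1/4`, and the vanishing
first moment gives `∫ (y - x)² K = ∫ y² K - x² ∫ K < t ∫ K`, i.e. `f''(x) < 0`. A differentiable
function whose derivative changes sign and vanishes only at strict down-crossings is unimodal.
-/

open MeasureTheory Real Set Filter Topology

/-- A function `f : ℝ → ℝ` is unimodal if there is a mode `a` such that `f` is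
nondecreasing on `(-∞, a]` and nonincreasing on `[a, ∞)`. -/
def Unimodal (f : ℝ → ℝ) : Prop :=
  ∃ a : ℝ, MonotoneOn f (Set.Iic a) ∧ AntitoneOn f (Set.Ici a)

section SignChange

variable {f g : ℝ → ℝ}

theorem HasDerivAt.eventually_sub_mul_neg {c x : ℝ} (hd : HasDerivAt g c x) (hc : c < 0)
    (hgx : g x = 0) : ∀ᶠ s in 𝓝[≠] x, (s - x) * g s < 0 := by
  filter_upwards [(hasDerivAt_iff_tendsto_slope.1 hd).eventually (gt_mem_nhds hc),
    self_mem_nhdsWithin] with s hslope hs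
  rw [slope_def_field, hgx, sub_zero] at hslope
  have hsx : s - x ≠ 0 := sub_ne_zero.2 hs
  calc (s - x) * g s = (s - x) ^ 2 * (g s / (s - x)) := by field_simp
    _ < 0 := mul_neg_of_pos_of_neg (by positivity) hslope

theorem neg_of_neg_of_le (hg : Continuous g)
    (hcross : ∀ x, g x = 0 → ∃ c < 0, HasDerivAt g c x) {x y : ℝ} (hx : g x < 0)
    (hxy : x ≤ y) : g y < 0 := by
  by_contra! hy
  set Z := Icc x y ∩ g ⁻¹' {0}
  have hZ : Z.Nonempty := intermediate_value_Icc hxy hg.continuousOn ⟨hx.le, hy⟩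
  obtain ⟨m, ⟨hm, hgm⟩, hmin⟩ :=
    (isCompact_Icc.inter_right (isClosed_singleton.preimage hg)).exists_isLeast hZ
  have hxm : x < m := hm.1.lt_of_ne (by rintro rfl; exact hx.ne hgm)
  obtain ⟨c, hc, hd⟩ := hcross m hgm
  obtain ⟨w, hw, hxw, hwm⟩ := ((hd.eventually_sub_mul_neg hc hgm).filter_mono
    (nhdsLT_le_nhdsNE m)).and (Ioo_mem_nhdsLT hxm) |>.exists
  have hgw : 0 < g w := by nlinarith
  obtain ⟨v, hv, hgv⟩ := intermediate_value_Icc hxw.le hg.continuousOn ⟨hx.le, hgw.le⟩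
  have := hmin ⟨⟨hv.1, hv.2.trans (hwm.le.trans hm.2)⟩, hgv⟩
  linarith [hv.2]

theorem unimodal_of_hasDerivAt (hf : ∀ x, HasDerivAt f (g x) x) (hg : Continuous g)
    (hcross : ∀ x, g x = 0 → ∃ c < 0, HasDerivAt g c x) {p q : ℝ} (hpq : p ≤ q)
    (hp : 0 ≤ g p) (hq : g q ≤ 0) : Unimodal f := by
  obtain ⟨a, -, ha⟩ := intermediate_value_Icc' hpq hg.continuousOn ⟨hq, hp⟩
  have hfc : Continuous f := continuous_iff_continuousAt.2 fun x => (hf x).continuousAt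
  refine ⟨a, monotoneOn_of_deriv_nonneg (convex_Iic a) hfc.continuousOn
    (fun x _ => (hf x).differentiableAt.differentiableWithinAt) fun x hx => ?_,
    antitoneOn_of_deriv_nonpos (convex_Ici a) hfc.continuousOn
    (fun x _ => (hf x).differentiableAt.differentiableWithinAt) fun x hx => ?_⟩
  · rw [interior_Iic] at hx
    rw [(hf x).deriv]
    by_contra! hgx
    exact (neg_of_neg_of_le hg hcross hgx hx.le).ne ha
  · rw [interior_Ici] at hx
    rw [(hf x).deriv]
    obtain ⟨c, hc, hd⟩ := hcross a ha
    obtain ⟨w, hw, haw, hwx⟩ := ((hd.eventually_sub_mul_neg hc ha).filter_mono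
      (nhdsGT_le_nhdsNE a)).and (Ioo_mem_nhdsGT hx) |>.exists
    have hgw : g w < 0 := by nlinarith
    exact (neg_of_neg_of_le hg hcross hgw hwx.le).le

end SignChange

noncomputable def gaussianKernel (t x y : ℝ) : ℝ := exp (-(x - y) ^ 2 / (2 * t))

section Kernel

variable {t : ℝ}

theorem gaussianKernel_pos (t x y : ℝ) : 0 < gaussianKernel t x y := exp_pos _

theorem gaussianKernel_le_one (ht : 0 ≤ t) (x y : ℝ) : gaussianKernel t x y ≤ 1 :=
  exp_le_one_iff.2 (div_nonpos_of_nonpos_of_nonneg (by nlinarith) (by positivity))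

@[fun_prop]
theorem continuous_gaussianKernel (t x : ℝ) : Continuous (gaussianKernel t x) := by
  unfold gaussianKernel; fun_prop

theorem one_sub_le_gaussianKernel (t x y : ℝ) :
    1 - (x - y) ^ 2 / (2 * t) ≤ gaussianKernel t x y := by
  unfold gaussianKernel
  rw [neg_div]
  linarith [add_one_le_exp (-((x - y) ^ 2 / (2 * t)))]

theorem gaussianKernel_le_gaussianKernel (ht : 0 < t) {x y x' y' : ℝ}
    (h : (x - y) ^ 2 ≤ (x' - y') ^ 2) :
    gaussianKernel t x' y' ≤ gaussianKernel t x y := by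
  unfold gaussianKernel
  gcongr

theorem gaussianKernel_neg_neg (t x y : ℝ) : gaussianKernel t (-x) (-y) = gaussianKernel t x y := by
  rw [gaussianKernel, gaussianKernel, neg_sub_neg, ← neg_sub, neg_sq]

theorem sq_sub_mul_gaussianKernel_le (ht : 0 < t) (x y : ℝ) :
    (y - x) ^ 2 * gaussianKernel t x y ≤ 2 * t := by
  set s := (x - y) ^ 2 / (2 * t)
  have hs : s ≤ exp s := by linarith [add_one_le_exp s]
  have : (y - x) ^ 2 = 2 * t * s := by simp only [s]; field_simp; ring
  calc (y - x) ^ 2 * gaussianKernel t x y = 2 * t * (s * exp (-s)) := by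
        rw [this, gaussianKernel, neg_div]; ring
    _ ≤ 2 * t * (exp s * exp (-s)) := by gcongr
    _ = 2 * t := by rw [← exp_add, add_neg_cancel, exp_zero, mul_one]

theorem abs_sub_mul_gaussianKernel_le (ht : 0 < t) (x y : ℝ) :
    |y - x| * gaussianKernel t x y ≤ √(2 * t) := by
  apply le_sqrt_of_sq_le
  calc (|y - x| * gaussianKernel t x y) ^ 2
      = (y - x) ^ 2 * gaussianKernel t x y * gaussianKernel t x y := by
        rw [mul_pow, sq_abs]; ring
    _ ≤ (y - x) ^ 2 * gaussianKernel t x y * 1 :=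
        mul_le_mul_of_nonneg_left (gaussianKernel_le_one ht.le x y)
          (mul_nonneg (sq_nonneg _) (gaussianKernel_pos t x y).le)
    _ ≤ 2 * t := by rw [mul_one]; exact sq_sub_mul_gaussianKernel_le ht x y

theorem hasDerivAt_gaussianKernel (ht : t ≠ 0) (x y : ℝ) :
    HasDerivAt (fun x => gaussianKernel t x y) ((y - x) / t * gaussianKernel t x y) x := by
  have h : HasDerivAt (fun x => -(x - y) ^ 2 / (2 * t)) ((y - x) / t) x :=
    ((((hasDerivAt_id' x).sub_const y).pow 2).neg.div_const (2 * t)).congr_deriv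
      (by field_simp; ring)
  exact h.exp.congr_deriv (mul_comm _ _)

theorem hasDerivAt_sub_mul_gaussianKernel (ht : t ≠ 0) (x y : ℝ) :
    HasDerivAt (fun x => (y - x) * gaussianKernel t x y)
      (((y - x) ^ 2 / t - 1) * gaussianKernel t x y) x :=
  (((hasDerivAt_id' x).const_sub y).mul (hasDerivAt_gaussianKernel ht x y)).congr_deriv
    (by ring)

end Kernel

section Differentiation

variable {μ : Measure ℝ} [IsFiniteMeasure μ] {t : ℝ}

theorem integrable_gaussianKernel (ht : 0 ≤ t) (x : ℝ) : Integrable (gaussianKernel t x) μ :=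
  .of_bound (by fun_prop) 1 <| ae_of_all _ fun _ => by
    rw [norm_of_nonneg (gaussianKernel_pos _ _ _).le]; exact gaussianKernel_le_one ht _ _

theorem integrable_sub_mul_gaussianKernel (ht : 0 < t) (x : ℝ) :
    Integrable (fun y => (y - x) * gaussianKernel t x y) μ :=
  .of_bound (by fun_prop) √(2 * t) <| ae_of_all _ fun y => by
    rw [norm_mul, norm_eq_abs, norm_of_nonneg (gaussianKernel_pos _ _ _).le]
    exact abs_sub_mul_gaussianKernel_le ht x y

theorem integrable_sq_sub_mul_gaussianKernel (ht : 0 < t) (x : ℝ) :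
    Integrable (fun y => (y - x) ^ 2 * gaussianKernel t x y) μ :=
  .of_bound (by fun_prop) (2 * t) <| ae_of_all _ fun y => by
    rw [norm_of_nonneg (mul_nonneg (sq_nonneg _) (gaussianKernel_pos _ _ _).le)]
    exact sq_sub_mul_gaussianKernel_le ht x y

theorem integrable_sq_mul_gaussianKernel (ht : 0 < t) (x : ℝ) :
    Integrable (fun y => y ^ 2 * gaussianKernel t x y) μ :=
  ((integrable_sq_sub_mul_gaussianKernel ht x).add
    (((integrable_sub_mul_gaussianKernel ht x).const_mul (2 * x)).add
      ((integrable_gaussianKernel ht.le x).const_mul (x ^ 2)))).congr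
    (ae_of_all _ fun y => by simp only [Pi.add_apply]; ring)

theorem hasDerivAt_integral_gaussianKernel (ht : 0 < t) (x : ℝ) :
    HasDerivAt (fun x => ∫ y, gaussianKernel t x y ∂μ)
      ((∫ y, (y - x) * gaussianKernel t x y ∂μ) / t) x := by
  have key := hasDerivAt_integral_of_dominated_loc_of_deriv_le (μ := μ) (x₀ := x)
    (F' := fun x y => (y - x) / t * gaussianKernel t x y) (bound := fun _ => √(2 * t) / t)
    univ_mem (.of_forall fun x => (integrable_gaussianKernel ht.le x).aestronglyMeasurable)
    (integrable_gaussianKernel ht.le x) (by fun_prop)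
    (ae_of_all _ fun y x _ => ?_) (integrable_const _)
    (ae_of_all _ fun y x _ => hasDerivAt_gaussianKernel ht.ne' x y)
  · simp_rw [div_mul_eq_mul_div, integral_div] at key
    exact key.2
  · rw [norm_mul, norm_div, norm_eq_abs, norm_eq_abs, abs_of_pos ht,
      norm_of_nonneg (gaussianKernel_pos _ _ _).le, div_mul_eq_mul_div]
    gcongr
    exact abs_sub_mul_gaussianKernel_le ht x y

theorem hasDerivAt_integral_sub_mul_gaussianKernel (ht : 0 < t) (x : ℝ) :
    HasDerivAt (fun x => ∫ y, (y - x) * gaussianKernel t x y ∂μ)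
      (∫ y, ((y - x) ^ 2 / t - 1) * gaussianKernel t x y ∂μ) x := by
  refine (hasDerivAt_integral_of_dominated_loc_of_deriv_le (μ := μ) (x₀ := x)
    (bound := fun _ => 3) univ_mem
    (.of_forall fun x => (integrable_sub_mul_gaussianKernel ht x).aestronglyMeasurable)
    (integrable_sub_mul_gaussianKernel ht x) (by fun_prop)
    (ae_of_all _ fun y x _ => ?_) (integrable_const _)
    (ae_of_all _ fun y x _ => hasDerivAt_sub_mul_gaussianKernel ht.ne' x y)).2
  have h2 : (y - x) ^ 2 / t * gaussianKernel t x y ≤ 2 := by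
    rw [div_mul_eq_mul_div, div_le_iff₀ ht]; linarith [sq_sub_mul_gaussianKernel_le ht x y]
  have h0 : 0 ≤ (y - x) ^ 2 / t * gaussianKernel t x y :=
    mul_nonneg (div_nonneg (sq_nonneg _) ht.le) (gaussianKernel_pos t x y).le
  rw [norm_eq_abs, abs_le, sub_mul, one_mul]
  constructor <;> linarith [gaussianKernel_le_one ht.le x y, gaussianKernel_pos t x y]

end Differentiation

theorem le_mul_exp_mul_sub {ε s₀ s : ℝ} (hs₀ : 0 ≤ s₀) (h₀ : 1 ≤ ε * s₀) (hs : s₀ ≤ s) :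
    s ≤ s₀ * exp (ε * (s - s₀)) := by
  nlinarith [mul_le_mul_of_nonneg_left (add_one_le_exp (ε * (s - s₀))) hs₀,
    mul_le_mul_of_nonneg_right h₀ (sub_nonneg.2 hs)]

section Estimates

variable {μ : Measure ℝ} [IsProbabilityMeasure μ] {ε r t x : ℝ}

theorem one_le_integral_exp_mul_sq (hε : 0 ≤ ε)
    (hint : Integrable (fun y => exp (ε * y ^ 2)) μ) : 1 ≤ ∫ y, exp (ε * y ^ 2) ∂μ :=
  calc (1 : ℝ) = ∫ _, (1 : ℝ) ∂μ := by simp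
    _ ≤ _ := integral_mono (integrable_const 1) hint fun _ => one_le_exp (by positivity)

theorem half_le_mul_sq (hε : 0 ≤ ε) (hint : Integrable (fun y => exp (ε * y ^ 2)) μ)
    (hα : ∫ y, exp (ε * y ^ 2) ∂μ ≤ exp (ε * r ^ 2) / 2) : 1 / 2 ≤ ε * r ^ 2 := by
  have h2 : log 2 ≤ ε * r ^ 2 :=
    (log_le_iff_le_exp two_pos).2 (by linarith [one_le_integral_exp_mul_sq hε hint])
  linarith [log_two_gt_d9]

theorem half_le_measureReal_Icc (hε : 0 ≤ ε) (hint : Integrable (fun y => exp (ε * y ^ 2)) μ)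
    (hα : ∫ y, exp (ε * y ^ 2) ∂μ ≤ exp (ε * r ^ 2) / 2) (hr : 0 ≤ r) :
    1 / 2 ≤ μ.real (Icc (-r) r) := by
  have hmarkov := mul_meas_ge_le_integral_of_nonneg (ae_of_all _ fun y => (exp_pos _).le) hint
    (exp (ε * r ^ 2))
  have htail : (Icc (-r) r)ᶜ ⊆ {y | exp (ε * r ^ 2) ≤ exp (ε * y ^ 2)} := by
    intro y hy
    simp only [mem_compl_iff, mem_Icc, not_and_or, not_le] at hy
    have : r ^ 2 ≤ y ^ 2 := by rcases hy with h | h <;> nlinarith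
    exact exp_le_exp.2 (mul_le_mul_of_nonneg_left this hε)
  have hle := measureReal_mono (μ := μ) htail
  rw [probReal_compl_eq_one_sub measurableSet_Icc] at hle
  nlinarith [exp_pos (ε * r ^ 2)]

theorem mul_exp_sub_lt_sub_mul_gaussianKernel (hr : 0 < r) (hεr : 1 / 2 ≤ ε * r ^ 2)
    (ht : 36 * r ^ 2 ≤ t) (hx : 5 * r ≤ x) :
    x * exp (ε * r ^ 2 - ε * x ^ 2) < (x - r) * gaussianKernel t x (-r) := by
  have hx0 : 0 < x := by linarith
  have hε : 0 < ε := by nlinarith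
  have ht0 : 0 < t := by nlinarith
  have h25 : 25 * (ε * r ^ 2) ≤ ε * x ^ 2 := by
    nlinarith [mul_le_mul_of_nonneg_left (show 25 * r ^ 2 ≤ x ^ 2 by nlinarith) hε.le]
  have hkernel : -(ε * x ^ 2 / 25) ≤ -(x - -r) ^ 2 / (2 * t) := by
    rw [neg_div, neg_le_neg_iff, div_le_iff₀ (by positivity)]
    nlinarith [mul_le_mul_of_nonneg_left ht (by positivity : 0 ≤ ε * x ^ 2)]
  calc x * exp (ε * r ^ 2 - ε * x ^ 2) ≤ x * exp (-1 + -(ε * x ^ 2 / 25)) := by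
        gcongr; linarith
    _ = exp (-1) * (x * exp (-(ε * x ^ 2 / 25))) := by rw [exp_add]; ring
    _ < 4 / 5 * (x * exp (-(ε * x ^ 2 / 25))) := by
        gcongr; linarith [exp_neg_one_lt_d9]
    _ ≤ (x - r) * exp (-(x - -r) ^ 2 / (2 * t)) := by
        rw [← mul_assoc]
        exact mul_le_mul (by linarith) (exp_le_exp.2 hkernel) (exp_pos _).le (by linarith)

theorem integral_sub_mul_gaussianKernel_neg (hε : 0 ≤ ε)
    (hint : Integrable (fun y => exp (ε * y ^ 2)) μ)
    (hα : ∫ y, exp (ε * y ^ 2) ∂μ ≤ exp (ε * r ^ 2) / 2) (hr : 0 ≤ r) (ht : 36 * r ^ 2 ≤ t)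
    (hx : 5 * r ≤ x) : ∫ y, (y - x) * gaussianKernel t x y ∂μ < 0 := by
  have hεr := half_le_mul_sq hε hint hα
  have hr0 : 0 < r := hr.lt_of_ne (by rintro rfl; norm_num at hεr)
  have ht0 : 0 < t := by nlinarith
  have hx0 : 0 < x := by linarith
  set c := (x - r) * gaussianKernel t x (-r)
  set C := x * exp (-(ε * x ^ 2))
  have hbound : ∀ y, (y - x) * gaussianKernel t x y
      ≤ (Icc (-r) r).indicator (fun _ => -c) y + C * exp (ε * y ^ 2) := by
    intro y
    by_cases hy : y ∈ Icc (-r) r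
    · rw [indicator_of_mem hy]
      have : c ≤ (x - y) * gaussianKernel t x y :=
        mul_le_mul (by linarith [hy.2])
          (gaussianKernel_le_gaussianKernel ht0 (by nlinarith [hy.1, hy.2]))
          (gaussianKernel_pos _ _ _).le (by linarith [hy.2])
      have : 0 ≤ C * exp (ε * y ^ 2) := by positivity
      linarith
    rw [indicator_of_notMem hy, zero_add]
    rcases le_or_gt y x with hyx | hxy
    · exact (mul_nonpos_of_nonpos_of_nonneg (by linarith) (gaussianKernel_pos _ _ _).le).trans
        (by positivity)
    have hsq := le_mul_exp_mul_sub (ε := ε) (sq_nonneg x) (by nlinarith)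
      (pow_le_pow_left₀ hx0.le hxy.le 2)
    calc (y - x) * gaussianKernel t x y ≤ y := by
          nlinarith [gaussianKernel_le_one ht0.le x y, gaussianKernel_pos t x y]
      _ ≤ y ^ 2 / x := by rw [le_div_iff₀ hx0]; nlinarith
      _ ≤ x ^ 2 * exp (ε * (y ^ 2 - x ^ 2)) / x := by gcongr
      _ = C * exp (ε * y ^ 2) := by
        simp only [C]; rw [mul_assoc, ← exp_add]; field_simp; ring_nf
  have hint' : Integrable (fun y => (Icc (-r) r).indicator (fun _ => -c) y
      + C * exp (ε * y ^ 2)) μ :=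
    ((integrable_const _).indicator measurableSet_Icc).add (hint.const_mul C)
  have hnum := mul_exp_sub_lt_sub_mul_gaussianKernel hr0 hεr ht hx
  calc ∫ y, (y - x) * gaussianKernel t x y ∂μ
      ≤ ∫ y, ((Icc (-r) r).indicator (fun _ => -c) y + C * exp (ε * y ^ 2)) ∂μ :=
        integral_mono (integrable_sub_mul_gaussianKernel ht0 x) hint' hbound
    _ = μ.real (Icc (-r) r) * -c + C * ∫ y, exp (ε * y ^ 2) ∂μ := by
        rw [integral_add ((integrable_const _).indicator measurableSet_Icc) (hint.const_mul C),
          integral_indicator_const _ measurableSet_Icc, integral_const_mul, smul_eq_mul]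
    _ < 0 := by
        have hCe : C * exp (ε * r ^ 2) = x * exp (ε * r ^ 2 - ε * x ^ 2) := by
          simp only [C]; rw [mul_assoc, ← exp_add]; ring_nf
        have hc : 0 < c := mul_pos (by linarith) (gaussianKernel_pos _ _ _)
        have hC : 0 ≤ C := by positivity
        nlinarith [mul_le_mul_of_nonneg_left hα hC,
          mul_le_mul_of_nonneg_right (half_le_measureReal_Icc hε hint hα hr) hc.le]

theorem integral_sub_mul_gaussianKernel_pos (hε : 0 ≤ ε)
    (hint : Integrable (fun y => exp (ε * y ^ 2)) μ)
    (hα : ∫ y, exp (ε * y ^ 2) ∂μ ≤ exp (ε * r ^ 2) / 2) (hr : 0 ≤ r) (ht : 36 * r ^ 2 ≤ t)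
    (hx : x ≤ -(5 * r)) : 0 < ∫ y, (y - x) * gaussianKernel t x y ∂μ := by
  let e := MeasurableEquiv.neg ℝ
  have : IsProbabilityMeasure (μ.map e) :=
    Measure.isProbabilityMeasure_map e.measurable.aemeasurable
  have hint' : Integrable (fun y => exp (ε * y ^ 2)) (μ.map e) := by
    rw [integrable_map_equiv]; simpa [Function.comp_def, e] using hint
  have hα' : ∫ y, exp (ε * y ^ 2) ∂(μ.map e) ≤ exp (ε * r ^ 2) / 2 := by
    rw [integral_map_equiv]; simpa [e] using hα
  have h := integral_sub_mul_gaussianKernel_neg hε hint' hα' hr ht (le_neg.2 hx)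
  rw [integral_map_equiv] at h
  have hrefl : ∫ y, (e y - -x) * gaussianKernel t (-x) (e y) ∂μ
      = -∫ y, (y - x) * gaussianKernel t x y ∂μ := by
    rw [← integral_neg]
    congr with y
    simp only [e, MeasurableEquiv.neg_apply, gaussianKernel_neg_neg]
    ring
  linarith

theorem quarter_le_integral_gaussianKernel (hε : 0 ≤ ε)
    (hint : Integrable (fun y => exp (ε * y ^ 2)) μ)
    (hα : ∫ y, exp (ε * y ^ 2) ∂μ ≤ exp (ε * r ^ 2) / 2) (hr : 0 ≤ r) (ht : 36 * r ^ 2 ≤ t)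
    (hx : |x| ≤ 5 * r) : 1 / 4 ≤ ∫ y, gaussianKernel t x y ∂μ := by
  have ht0 : 0 < t := by nlinarith [half_le_mul_sq hε hint hα]
  have hbound : ∀ y,
      (Icc (-r) r).indicator (fun _ => (1 / 2 : ℝ)) y ≤ gaussianKernel t x y := by
    intro y
    by_cases hy : y ∈ Icc (-r) r
    · rw [indicator_of_mem hy]
      have hxy : (x - y) ^ 2 / (2 * t) ≤ 1 / 2 := by
        rw [abs_le] at hx
        rw [div_le_iff₀ (by positivity)]
        nlinarith [hy.1, hy.2]
      linarith [one_sub_le_gaussianKernel t x y]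
    · rw [indicator_of_notMem hy]; exact (gaussianKernel_pos t x y).le
  calc 1 / 4 ≤ μ.real (Icc (-r) r) * (1 / 2) := by
        linarith [half_le_measureReal_Icc hε hint hα hr]
    _ = ∫ y, (Icc (-r) r).indicator (fun _ => (1 / 2 : ℝ)) y ∂μ := by
        rw [integral_indicator_const _ measurableSet_Icc, smul_eq_mul]
    _ ≤ ∫ y, gaussianKernel t x y ∂μ :=
        integral_mono ((integrable_const _).indicator measurableSet_Icc)
          (integrable_gaussianKernel ht0.le x) hbound

theorem integral_sq_mul_gaussianKernel_lt (hε : 0 ≤ ε)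
    (hint : Integrable (fun y => exp (ε * y ^ 2)) μ)
    (hα : ∫ y, exp (ε * y ^ 2) ∂μ ≤ exp (ε * r ^ 2) / 2) (ht : 36 * r ^ 2 ≤ t)
    (hB : 1 / 4 ≤ ∫ y, gaussianKernel t x y ∂μ) :
    ∫ y, y ^ 2 * gaussianKernel t x y ∂μ < t * ∫ y, gaussianKernel t x y ∂μ := by
  have hεr := half_le_mul_sq hε hint hα
  have ht0 : 0 < t := by nlinarith
  have hεt : 18 * (ε * r ^ 2) ≤ ε * (t / 2) := by nlinarith
  set C := t / 2 * exp (-(ε * (t / 2)))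
  have hbound : ∀ y, y ^ 2 * gaussianKernel t x y
      ≤ t / 2 * gaussianKernel t x y + C * exp (ε * y ^ 2) := by
    intro y
    rcases le_or_gt (y ^ 2) (t / 2) with hy | hy
    · have : 0 ≤ C * exp (ε * y ^ 2) := by positivity
      nlinarith [gaussianKernel_pos t x y]
    have hsq := le_mul_exp_mul_sub (ε := ε) (by positivity) (by linarith) hy.le
    calc y ^ 2 * gaussianKernel t x y ≤ y ^ 2 := by
          nlinarith [gaussianKernel_le_one ht0.le x y, sq_nonneg y]
      _ ≤ t / 2 * exp (ε * (y ^ 2 - t / 2)) := hsq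
      _ ≤ t / 2 * gaussianKernel t x y + C * exp (ε * y ^ 2) := by
        have : C * exp (ε * y ^ 2) = t / 2 * exp (ε * (y ^ 2 - t / 2)) := by
          simp only [C]; rw [mul_assoc, ← exp_add]; ring_nf
        nlinarith [gaussianKernel_pos t x y]
  have hC : C * exp (ε * r ^ 2) < t / 2 * (1 / 2) := by
    have : exp (-(ε * (t / 2))) * exp (ε * r ^ 2) ≤ exp (-1) := by
      rw [← exp_add]; gcongr; linarith
    simp only [C]
    nlinarith [exp_neg_one_lt_d9]
  calc ∫ y, y ^ 2 * gaussianKernel t x y ∂μ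
      ≤ ∫ y, (t / 2 * gaussianKernel t x y + C * exp (ε * y ^ 2)) ∂μ :=
        integral_mono (integrable_sq_mul_gaussianKernel ht0 x)
          (((integrable_gaussianKernel ht0.le x).const_mul _).add (hint.const_mul C)) hbound
    _ = t / 2 * ∫ y, gaussianKernel t x y ∂μ + C * ∫ y, exp (ε * y ^ 2) ∂μ := by
        rw [integral_add ((integrable_gaussianKernel ht0.le x).const_mul _) (hint.const_mul C),
          integral_const_mul, integral_const_mul]
    _ < t * ∫ y, gaussianKernel t x y ∂μ := by
        nlinarith [mul_le_mul_of_nonneg_left hα (by positivity : 0 ≤ C)]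

theorem integral_sq_div_sub_one_mul_gaussianKernel_neg (hε : 0 ≤ ε)
    (hint : Integrable (fun y => exp (ε * y ^ 2)) μ)
    (hα : ∫ y, exp (ε * y ^ 2) ∂μ ≤ exp (ε * r ^ 2) / 2) (hr : 0 ≤ r) (ht : 36 * r ^ 2 ≤ t)
    (hmean : ∫ y, (y - x) * gaussianKernel t x y ∂μ = 0) :
    ∫ y, ((y - x) ^ 2 / t - 1) * gaussianKernel t x y ∂μ < 0 := by
  have ht0 : 0 < t := by nlinarith [half_le_mul_sq hε hint hα]
  have hx : |x| ≤ 5 * r := by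
    refine abs_le.2 ⟨?_, ?_⟩ <;> by_contra! h
    · exact (integral_sub_mul_gaussianKernel_pos hε hint hα hr ht h.le).ne' hmean
    · exact (integral_sub_mul_gaussianKernel_neg hε hint hα hr ht h.le).ne hmean
  have hK := integrable_gaussianKernel (μ := μ) ht0.le x
  have h1 := integrable_sub_mul_gaussianKernel (μ := μ) ht0 x
  have h2 := integrable_sq_mul_gaussianKernel (μ := μ) ht0 x
  -- `(y - x)² = y² - 2x (y - x) - x²`, and the middle term integrates to `0`
  have hsplit : ∫ y, ((y - x) ^ 2 / t - 1) * gaussianKernel t x y ∂μ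
      = (∫ y, y ^ 2 * gaussianKernel t x y ∂μ
          - 2 * x * ∫ y, (y - x) * gaussianKernel t x y ∂μ
          - x ^ 2 * ∫ y, gaussianKernel t x y ∂μ) / t - ∫ y, gaussianKernel t x y ∂μ := by
    have hpt : ∀ y, ((y - x) ^ 2 / t - 1) * gaussianKernel t x y
        = (y ^ 2 * gaussianKernel t x y - 2 * x * ((y - x) * gaussianKernel t x y)
          - x ^ 2 * gaussianKernel t x y) / t - gaussianKernel t x y := fun y => by ring
    simp_rw [hpt]
    rw [integral_sub ?_ hK, integral_div, integral_sub ?_ (hK.const_mul _),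
      integral_sub h2 (h1.const_mul _), integral_const_mul, integral_const_mul]
    · exact h2.sub (h1.const_mul _)
    · exact ((h2.sub (h1.const_mul _)).sub (hK.const_mul _)).div_const t
  have hB := quarter_le_integral_gaussianKernel hε hint hα hr ht hx
  have hlt := integral_sq_mul_gaussianKernel_lt hε hint hα ht hB
  rw [hsplit, hmean, sub_neg, div_lt_iff₀ ht0]
  nlinarith [sq_nonneg x]

end Estimates

theorem gaussian_convolution_unimodal_large_time
    (μ : Measure ℝ) [IsProbabilityMeasure μ] (ε : ℝ) (hε : 0 < ε)
    (hint : Integrable (fun x => Real.exp (ε * x ^ 2)) μ)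
    (α : ℝ) (hα : α = ∫ x, Real.exp (ε * x ^ 2) ∂μ)
    (t : ℝ) (ht : 36 * Real.log (2 * α) / ε ≤ t) :
    Unimodal (fun x => ∫ y, Real.exp (-(x - y) ^ 2 / (2 * t)) ∂μ) := by
  have hα1 : 1 ≤ α := hα ▸ one_le_integral_exp_mul_sq hε.le hint
  set r := √(log (2 * α) / ε)
  have hr2 : r ^ 2 = log (2 * α) / ε := sq_sqrt (div_nonneg (log_nonneg (by linarith)) hε.le)
  have hαr : ∫ y, exp (ε * y ^ 2) ∂μ ≤ exp (ε * r ^ 2) / 2 := by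
    rw [hr2, mul_div_cancel₀ _ hε.ne', exp_log (by linarith), ← hα]; linarith
  have hrt : 36 * r ^ 2 ≤ t := by rwa [hr2, ← mul_div_assoc]
  have hr : 0 ≤ r := sqrt_nonneg _
  have ht0 : 0 < t := by nlinarith [half_le_mul_sq hε.le hint hαr]
  change Unimodal fun x => ∫ y, gaussianKernel t x y ∂μ
  refine unimodal_of_hasDerivAt (fun x => hasDerivAt_integral_gaussianKernel ht0 x)
    ((continuous_iff_continuousAt.2 fun x =>
      (hasDerivAt_integral_sub_mul_gaussianKernel ht0 x).continuousAt).div_const t)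
    (fun x hx => ⟨_, ?_, (hasDerivAt_integral_sub_mul_gaussianKernel ht0 x).div_const t⟩)
    (neg_le_self (by positivity : 0 ≤ 5 * r))
    (div_nonneg (integral_sub_mul_gaussianKernel_pos hε.le hint hαr hr hrt le_rfl).le ht0.le)
    (div_nonpos_of_nonpos_of_nonneg
      (integral_sub_mul_gaussianKernel_neg hε.le hint hαr hr hrt le_rfl).le ht0.le)
  exact div_neg_of_neg_of_pos (integral_sq_div_sub_one_mul_gaussianKernel_neg hε.le hint hαr hr hrt
    ((div_eq_zero_iff.1 hx).resolve_right ht0.ne')) ht0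
end

section
/- Let μ be a Borel probability measure on ℝ and let ε > 0 be such that α := ∫_ℝ exp(ε x²) dμ(x) < ∞. Then for every t ≥ 36·log(2α)/ε, the function f_{μ,t}(x) = ∫_ℝ exp(-(x-y)²/(2t)) dμ(y) is twice differentiable on ℝ and its second derivative satisfies f_{μ,t}''(x) < 0 for every x with |x| < √t/2. -/
open MeasureTheory Real Set Filter Topology

/-!
Differentiating twice under the integral (the kernel and its first two derivatives are bounded
for `t > 0`) gives `f'' x = t⁻¹ ∫ φ (x - y) dμ(y)` with `φ u = (u² / t - 1) e^{-u² / (2t)}`.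
Now `φ ≤ 2 e⁻¹ < 3/4` everywhere, while `φ ≤ -5/16` when `|u| ≤ 3√t/4`, which is the case for
`|x| < √t/2` and `|y| ≤ √t/4`. The far region `|y| > √t/4` is controlled by Markov's inequality
for `e^{ε y²}`, used in the pointwise form `φ (x - y) ≤ -5/16 + 17/16 · e^{ε y²} / e^{ε t/16}`;
integrating gives `∫ φ (x - y) dμ ≤ -5/16 + 17/16 · α / e^{ε t/16}`, and the time condition
makes `e^{ε t/16} ≥ (2α)² ≥ 4α`, so the right-hand side is at most `-5/16 + 17/64 < 0`.
-/

section Convolution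

variable {E : Type*} [NormedAddCommGroup E] {μ : Measure ℝ} [IsFiniteMeasure μ]

theorem integrable_comp_sub_of_norm_le {g : ℝ → E} (hg : Continuous g) {C : ℝ}
    (hgC : ∀ u, ‖g u‖ ≤ C) (x : ℝ) : Integrable (fun y => g (x - y)) μ :=
  .of_bound (hg.comp (continuous_sub_left x)).aestronglyMeasurable C (ae_of_all _ fun _ => hgC _)

theorem hasDerivAt_integral_comp_sub [NormedSpace ℝ E] {g g' : ℝ → E}
    (hg : ∀ u, HasDerivAt g (g' u) u) (hg' : Continuous g') {C C' : ℝ} (hgC : ∀ u, ‖g u‖ ≤ C)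
    (hg'C : ∀ u, ‖g' u‖ ≤ C') (x : ℝ) :
    HasDerivAt (fun x => ∫ y, g (x - y) ∂μ) (∫ y, g' (x - y) ∂μ) x := by
  have hg_cont : Continuous g := continuous_iff_continuousAt.2 fun u => (hg u).continuousAt
  refine (hasDerivAt_integral_of_dominated_loc_of_deriv_le (s := univ) univ_mem
    (.of_forall fun x => (integrable_comp_sub_of_norm_le hg_cont hgC x).aestronglyMeasurable)
    (integrable_comp_sub_of_norm_le hg_cont hgC x)
    (integrable_comp_sub_of_norm_le hg' hg'C x).aestronglyMeasurable
    (ae_of_all _ fun y x _ => hg'C (x - y)) (integrable_const C')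
    (ae_of_all _ fun y x _ => ?_)).2
  exact HasDerivAt.comp_sub_const x y (hg (x - y))

end Convolution

section GaussianKernel

variable {t : ℝ}

theorem hasDerivAt_exp_neg_sq_div (t u : ℝ) :
    HasDerivAt (fun u => exp (-u ^ 2 / (2 * t))) (-u / t * exp (-u ^ 2 / (2 * t))) u := by
  have h : HasDerivAt (fun u => -u ^ 2 / (2 * t)) (-u / t) u :=
    ((hasDerivAt_pow 2 u).fun_neg.div_const (2 * t)).congr_deriv (by push_cast; ring)
  simpa only [mul_comm] using h.exp

theorem hasDerivAt_neg_div_mul_exp_neg_sq_div (t u : ℝ) :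
    HasDerivAt (fun u => -u / t * exp (-u ^ 2 / (2 * t)))
      (t⁻¹ * ((u ^ 2 / t - 1) * exp (-u ^ 2 / (2 * t)))) u :=
  (((hasDerivAt_id' u).fun_neg.div_const t).fun_mul
    (hasDerivAt_exp_neg_sq_div t u)).congr_deriv (by ring)

theorem exp_neg_sq_div_le_one (ht : 0 ≤ t) (u : ℝ) : exp (-u ^ 2 / (2 * t)) ≤ 1 :=
  exp_le_one_iff.2 (div_nonpos_of_nonpos_of_nonneg (neg_nonpos.2 (sq_nonneg u)) (by positivity))

theorem sq_mul_exp_neg_sq_div_le (ht : 0 < t) (u : ℝ) :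
    u ^ 2 * exp (-u ^ 2 / (2 * t)) ≤ 2 * t * exp (-1) := by
  have h := mul_le_mul_of_nonneg_left (mul_exp_neg_le_exp_neg_one (u ^ 2 / (2 * t)))
    (by positivity : (0 : ℝ) ≤ 2 * t)
  rwa [← mul_assoc, mul_div_cancel₀ _ (by positivity), ← neg_div] at h

theorem abs_neg_div_mul_exp_neg_sq_div_le (ht : 0 < t) (u : ℝ) :
    |-u / t * exp (-u ^ 2 / (2 * t))| ≤ (1 + t) / t := by
  have hE_le := exp_neg_sq_div_le_one ht.le u
  have hsq := sq_mul_exp_neg_sq_div_le ht u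
  have habs : |u| ≤ 1 + u ^ 2 := by nlinarith [sq_abs u, abs_nonneg u]
  have hbound : |u| * exp (-u ^ 2 / (2 * t)) ≤ 1 + t := by
    nlinarith [exp_neg_one_lt_half, exp_pos (-u ^ 2 / (2 * t))]
  rw [abs_mul, abs_div, abs_neg, abs_of_pos ht, abs_of_pos (exp_pos _), div_mul_eq_mul_div]
  exact div_le_div_of_nonneg_right hbound ht.le

theorem sq_div_sub_one_mul_exp_neg_sq_div_le (ht : 0 < t) (u : ℝ) :
    (u ^ 2 / t - 1) * exp (-u ^ 2 / (2 * t)) ≤ 3 / 4 := by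
  have hE := exp_pos (-u ^ 2 / (2 * t))
  calc (u ^ 2 / t - 1) * exp (-u ^ 2 / (2 * t))
      ≤ u ^ 2 * exp (-u ^ 2 / (2 * t)) / t := by rw [sub_mul, div_mul_eq_mul_div]; linarith
    _ ≤ 2 * t * exp (-1) / t := div_le_div_of_nonneg_right (sq_mul_exp_neg_sq_div_le ht u) ht.le
    _ ≤ 3 / 4 := by
      rw [mul_div_right_comm, mul_div_cancel_right₀ _ ht.ne']
      linarith [exp_neg_one_lt_d9]

theorem abs_sq_div_sub_one_mul_exp_neg_sq_div_le_one (ht : 0 < t) (u : ℝ) :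
    |(u ^ 2 / t - 1) * exp (-u ^ 2 / (2 * t))| ≤ 1 := by
  refine abs_le.2 ⟨?_, (sq_div_sub_one_mul_exp_neg_sq_div_le ht u).trans (by norm_num)⟩
  nlinarith [div_nonneg (sq_nonneg u) ht.le, exp_pos (-u ^ 2 / (2 * t)),
    exp_neg_sq_div_le_one ht.le u]

theorem abs_inv_mul_sq_div_sub_one_mul_exp_neg_sq_div_le (ht : 0 < t) (u : ℝ) :
    |t⁻¹ * ((u ^ 2 / t - 1) * exp (-u ^ 2 / (2 * t)))| ≤ t⁻¹ := by
  rw [abs_mul, abs_of_pos (inv_pos.2 ht)]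
  exact mul_le_of_le_one_right (inv_pos.2 ht).le
    (abs_sq_div_sub_one_mul_exp_neg_sq_div_le_one ht u)

theorem sq_div_sub_one_mul_exp_neg_sq_div_le_of_sq_le (ht : 0 < t) {u : ℝ}
    (hu : 16 * u ^ 2 ≤ 9 * t) : (u ^ 2 / t - 1) * exp (-u ^ 2 / (2 * t)) ≤ -5 / 16 := by
  have hcoef : u ^ 2 / t - 1 ≤ -7 / 16 := by
    rw [div_sub_one ht.ne', div_le_iff₀ ht]
    linarith
  have hs : u ^ 2 / (2 * t) ≤ 9 / 32 := by
    rw [div_le_iff₀ (by positivity)]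
    linarith
  have hexp : 23 / 32 ≤ exp (-u ^ 2 / (2 * t)) := by
    linarith [add_one_le_exp (-u ^ 2 / (2 * t)), neg_div (2 * t) (u ^ 2)]
  nlinarith [mul_le_mul_of_nonneg_right hcoef (exp_pos (-u ^ 2 / (2 * t))).le]

theorem sq_div_sub_one_mul_exp_neg_sq_div_le_of_abs_lt {ε t x : ℝ} (hε : 0 ≤ ε) (ht : 0 < t)
    (hx : |x| < √t / 2) (y : ℝ) :
    ((x - y) ^ 2 / t - 1) * exp (-(x - y) ^ 2 / (2 * t))
      ≤ -5 / 16 + 17 / 16 * (exp (ε * y ^ 2) / exp (ε * t / 16)) := by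
  have hK := exp_pos (ε * t / 16)
  rcases le_or_gt |y| (√t / 4) with hy | hy
  · have hxy : |x - y| < 3 * √t / 4 := (abs_sub x y).trans_lt (by linarith)
    have hxy2 : 16 * (x - y) ^ 2 ≤ 9 * t := by
      nlinarith [sq_abs (x - y), abs_nonneg (x - y), sq_sqrt ht.le]
    have : 0 ≤ exp (ε * y ^ 2) / exp (ε * t / 16) := by positivity
    linarith [sq_div_sub_one_mul_exp_neg_sq_div_le_of_sq_le ht hxy2]
  · have hy2 : t / 16 < y ^ 2 := by nlinarith [sq_abs y, sq_sqrt ht.le, sqrt_nonneg t]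
    have : 1 ≤ exp (ε * y ^ 2) / exp (ε * t / 16) :=
      (one_le_div hK).2 (exp_le_exp.2 (by nlinarith))
    linarith [sq_div_sub_one_mul_exp_neg_sq_div_le ht (x - y)]

end GaussianKernel

theorem integral_sq_div_sub_one_mul_exp_neg_sq_div_neg {μ : Measure ℝ} [IsProbabilityMeasure μ]
    {ε t x : ℝ} (hε : 0 ≤ ε) (hint : Integrable (fun y => exp (ε * y ^ 2)) μ) (ht : 0 < t)
    (hlarge : 4 * ∫ y, exp (ε * y ^ 2) ∂μ ≤ exp (ε * t / 16)) (hx : |x| < √t / 2) :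
    ∫ y, ((x - y) ^ 2 / t - 1) * exp (-(x - y) ^ 2 / (2 * t)) ∂μ < 0 := by
  have hK := exp_pos (ε * t / 16)
  have hφ : Integrable (fun y => ((x - y) ^ 2 / t - 1) * exp (-(x - y) ^ 2 / (2 * t))) μ :=
    integrable_comp_sub_of_norm_le (g := fun u => (u ^ 2 / t - 1) * exp (-u ^ 2 / (2 * t)))
      (by fun_prop) (abs_sq_div_sub_one_mul_exp_neg_sq_div_le_one ht) x
  calc ∫ y, ((x - y) ^ 2 / t - 1) * exp (-(x - y) ^ 2 / (2 * t)) ∂μ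
      ≤ ∫ y, (-5 / 16 + 17 / 16 * (exp (ε * y ^ 2) / exp (ε * t / 16))) ∂μ :=
        integral_mono hφ ((integrable_const _).add ((hint.div_const _).const_mul _))
          (sq_div_sub_one_mul_exp_neg_sq_div_le_of_abs_lt hε ht hx)
    _ = -5 / 16 + 17 / 16 * ((∫ y, exp (ε * y ^ 2) ∂μ) / exp (ε * t / 16)) := by
        rw [integral_add (integrable_const _) ((hint.div_const _).const_mul _), integral_const,
          integral_const_mul, integral_div]
        simp
    _ ≤ -5 / 16 + 17 / 16 * (1 / 4) := by
        have : (∫ y, exp (ε * y ^ 2) ∂μ) / exp (ε * t / 16) ≤ 1 / 4 := by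
          rw [div_le_iff₀ hK]
          linarith
        linarith
    _ < 0 := by norm_num

theorem four_mul_le_exp_of_log_le {α ε t : ℝ} (hα : 1 ≤ α) (hε : 0 < ε)
    (ht : 36 * log (2 * α) / ε ≤ t) : 4 * α ≤ exp (ε * t / 16) := by
  have hlog : 0 ≤ log (2 * α) := log_nonneg (by linarith)
  have hεt : 36 * log (2 * α) ≤ ε * t := by rwa [div_le_iff₀ hε, mul_comm t] at ht
  calc 4 * α ≤ (2 * α) * (2 * α) := by nlinarith
    _ = exp (log (2 * α) + log (2 * α)) := by rw [exp_add, exp_log (by positivity)]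
    _ ≤ exp (ε * t / 16) := exp_le_exp.2 (by linarith)

theorem gaussian_convolution_second_deriv_neg_large_time
    (μ : Measure ℝ) [IsProbabilityMeasure μ] (ε : ℝ) (hε : 0 < ε)
    (hint : Integrable (fun x => Real.exp (ε * x ^ 2)) μ)
    (α : ℝ) (hα : α = ∫ x, Real.exp (ε * x ^ 2) ∂μ)
    (t : ℝ) (ht : 36 * Real.log (2 * α) / ε ≤ t) :
    Differentiable ℝ (fun x : ℝ => ∫ y, Real.exp (-(x - y) ^ 2 / (2 * t)) ∂μ) ∧
    Differentiable ℝ (deriv (fun x : ℝ => ∫ y, Real.exp (-(x - y) ^ 2 / (2 * t)) ∂μ)) ∧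
    (∀ x : ℝ, |x| < Real.sqrt t / 2 →
      deriv (deriv (fun x : ℝ => ∫ y, Real.exp (-(x - y) ^ 2 / (2 * t)) ∂μ)) x < 0) := by
  have hα1 : 1 ≤ α := hα ▸ by
    simpa using integral_mono (integrable_const 1) hint fun x => one_le_exp (by positivity)
  have ht0 : 0 < t := (div_pos (mul_pos (by norm_num) (log_pos (by linarith))) hε).trans_le ht
  have hf (x : ℝ) : HasDerivAt (fun x => ∫ y, exp (-(x - y) ^ 2 / (2 * t)) ∂μ)
      (∫ y, -(x - y) / t * exp (-(x - y) ^ 2 / (2 * t)) ∂μ) x :=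
    hasDerivAt_integral_comp_sub (hasDerivAt_exp_neg_sq_div t) (by fun_prop)
      (fun u => (abs_of_pos (exp_pos _)).trans_le (exp_neg_sq_div_le_one ht0.le u))
      (abs_neg_div_mul_exp_neg_sq_div_le ht0) x
  have hf' (x : ℝ) : HasDerivAt (fun x => ∫ y, -(x - y) / t * exp (-(x - y) ^ 2 / (2 * t)) ∂μ)
      (∫ y, t⁻¹ * (((x - y) ^ 2 / t - 1) * exp (-(x - y) ^ 2 / (2 * t))) ∂μ) x :=
    hasDerivAt_integral_comp_sub (hasDerivAt_neg_div_mul_exp_neg_sq_div t) (by fun_prop)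
      (abs_neg_div_mul_exp_neg_sq_div_le ht0)
      (abs_inv_mul_sq_div_sub_one_mul_exp_neg_sq_div_le ht0) x
  have hderiv := funext fun x => (hf x).deriv
  refine ⟨fun x => (hf x).differentiableAt, hderiv ▸ fun x => (hf' x).differentiableAt,
    fun x hx => ?_⟩
  rw [hderiv, (hf' x).deriv, integral_const_mul]
  exact mul_neg_of_pos_of_neg (inv_pos.2 ht0) (integral_sq_div_sub_one_mul_exp_neg_sq_div_neg
    hε.le hint ht0 (hα ▸ four_mul_le_exp_of_log_le hα1 hε ht) hx)
end

section
/- There exists a Borel probability measure μ on ℝ with the following three properties: (i) for every A > 0 and every p with 0 < p < 2, ∫_ℝ exp(A·|x|^p) dμ(x) < ∞; (ii) for every A > 0, ∫_ℝ exp(A x²) dμ(x) = ∞; (iii) for every t > 0, the function f_{μ,t}(x) = ∫_ℝ exp(-(x-y)²/(2t)) dμ(y) is not unimodal. -/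
/-!
Put mass proportional to `exp (-4 ^ n / (n + 1))` at the point `2 ^ n`. Against `exp (A * x ^ 2)`
the atom at `2 ^ n` contributes `exp (4 ^ n * (A - 1 / (n + 1)))`, which tends to infinity, while
against `exp (A * |x| ^ p)` with `p < 2` it contributes `exp (A * (2 ^ p) ^ n - 4 ^ n / (n + 1))`,
which is eventually below `exp (-n)`. The masses decay slower than any Gaussian, but the atoms are
so sparse that the midpoint `3 * 2 ^ n / 2` of two consecutive atoms is at distance at least
`2 ^ n / 2` from all of them; hence for large `n` the Gaussian convolution at that midpoint is at
most `exp (-4 ^ n / (8 * t))`, smaller than its values at `2 ^ n` and `2 ^ (n + 1)`, which are at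
least the masses of those atoms.
-/

open MeasureTheory Real Set Filter Topology

open scoped ENNReal

theorem not_unimodal_of_lt_of_lt {f : ℝ → ℝ} {a b c : ℝ} (hab : a < b) (hbc : b < c)
    (ha : f b < f a) (hc : f b < f c) : ¬ Unimodal f := by
  rintro ⟨m, hmono, hanti⟩
  rcases le_total b m with hbm | hmb
  · exact (hmono (hab.le.trans hbm) hbm hab.le).not_gt ha
  · exact (hanti hmb (hmb.trans hbc.le) hbc.le).not_gt hc

section DiscreteMeasure

variable {α ι : Type*} [MeasurableSpace α]

noncomputable def discreteMeasure (c : ι → ℝ) (x : ι → α) : Measure α :=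
  Measure.sum fun n => ENNReal.ofReal (c n) • Measure.dirac (x n)

variable {c : ι → ℝ} {x : ι → α}

theorem lintegral_discreteMeasure [MeasurableSingletonClass α] (f : α → ℝ≥0∞) :
    ∫⁻ y, f y ∂discreteMeasure c x = ∑' n, ENNReal.ofReal (c n) * f (x n) := by
  simp only [discreteMeasure, lintegral_sum_measure, lintegral_smul_measure, lintegral_dirac,
    smul_eq_mul]

theorem isProbabilityMeasure_discreteMeasure (hc : ∀ n, 0 ≤ c n) (hsum : HasSum c 1) :
    IsProbabilityMeasure (discreteMeasure c x) := by
  constructor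
  simp only [discreteMeasure, Measure.sum_apply _ MeasurableSet.univ, Measure.smul_apply,
    measure_univ, smul_eq_mul, mul_one]
  rw [← ENNReal.ofReal_tsum_of_nonneg hc hsum.summable, hsum.tsum_eq, ENNReal.ofReal_one]

theorem ofReal_le_discreteMeasure_singleton [MeasurableSingletonClass α] (n : ι) :
    ENNReal.ofReal (c n) ≤ discreteMeasure c x {x n} :=
  calc ENNReal.ofReal (c n) = (ENNReal.ofReal (c n) • Measure.dirac (x n)) {x n} := by simp
    _ ≤ discreteMeasure c x {x n} := Measure.le_sum _ n _

theorem ae_mem_range_discreteMeasure [Countable ι] [MeasurableSingletonClass α] :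
    ∀ᵐ y ∂discreteMeasure c x, y ∈ range x := by
  rw [discreteMeasure, Measure.ae_sum_iff]
  exact fun n => Measure.ae_smul_measure ((ae_dirac_iff (countable_range x).measurableSet).2
    (mem_range_self n)) _

theorem integrable_discreteMeasure [MeasurableSingletonClass α] {g : α → ℝ}
    (hg : AEStronglyMeasurable g (discreteMeasure c x)) (hc : ∀ n, 0 ≤ c n)
    (hs : Summable fun n => c n * ‖g (x n)‖) : Integrable g (discreteMeasure c x) := by
  refine ⟨hg, ?_⟩
  simp only [HasFiniteIntegral, lintegral_discreteMeasure, ← ofReal_norm,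
    ← ENNReal.ofReal_mul (hc _)]
  rw [← ENNReal.ofReal_tsum_of_nonneg (fun n => mul_nonneg (hc n) (norm_nonneg _)) hs]
  exact ENNReal.ofReal_lt_top

theorem lintegral_discreteMeasure_eq_top [MeasurableSingletonClass α] {g : α → ℝ}
    {l : Filter ι} [l.NeBot] (hc : ∀ n, 0 ≤ c n) (h : Tendsto (fun n => c n * g (x n)) l atTop) :
    ∫⁻ y, ENNReal.ofReal (g y) ∂discreteMeasure c x = ⊤ := by
  simp only [lintegral_discreteMeasure, ← ENNReal.ofReal_mul (hc _)]
  exact top_unique (le_of_tendsto' (ENNReal.tendsto_ofReal_atTop.comp h) ENNReal.le_tsum)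

end DiscreteMeasure

section GaussianKernel

variable {μ : Measure ℝ} {t : ℝ}

theorem integrable_gaussianKernel_s3 [IsFiniteMeasure μ] (ht : 0 ≤ t) (x : ℝ) :
    Integrable (fun y => exp (-(x - y) ^ 2 / (2 * t))) μ := by
  refine Integrable.of_bound (by fun_prop) 1 (ae_of_all _ fun y => ?_)
  rw [Real.norm_of_nonneg (exp_nonneg _), exp_le_one_iff]
  exact div_nonpos_of_nonpos_of_nonneg (neg_nonpos.2 (sq_nonneg _)) (by positivity)

theorem measureReal_singleton_le_integral_gaussianKernel [IsFiniteMeasure μ] (ht : 0 ≤ t)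
    (x : ℝ) : μ.real {x} ≤ ∫ y, exp (-(x - y) ^ 2 / (2 * t)) ∂μ :=
  calc μ.real {x} = ∫ y in {x}, exp (-(x - y) ^ 2 / (2 * t)) ∂μ := by
        simp [Measure.restrict_singleton, integral_smul_measure, measureReal_def]
    _ ≤ _ := setIntegral_le_integral (integrable_gaussianKernel_s3 ht x)
        (ae_of_all _ fun _ => exp_nonneg _)

theorem integral_gaussianKernel_le [IsProbabilityMeasure μ] (ht : 0 ≤ t) {x d : ℝ} (hd : 0 ≤ d)
    (h : ∀ᵐ y ∂μ, d ≤ |x - y|) :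
    ∫ y, exp (-(x - y) ^ 2 / (2 * t)) ∂μ ≤ exp (-d ^ 2 / (2 * t)) :=
  calc ∫ y, exp (-(x - y) ^ 2 / (2 * t)) ∂μ ≤ ∫ _, exp (-d ^ 2 / (2 * t)) ∂μ := by
        refine integral_mono_ae (integrable_gaussianKernel_s3 ht x) (integrable_const _) ?_
        filter_upwards [h] with y hy
        gcongr exp (-?_ / _)
        simpa only [sq_abs] using pow_le_pow_left₀ hd hy 2
    _ = exp (-d ^ 2 / (2 * t)) := by simp

end GaussianKernel

theorem eventually_succ_mul_le_pow {r s : ℝ} (hr : 0 ≤ r) (hrs : r < s) (hs : 1 < s) (A : ℝ) :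
    ∀ᶠ n : ℕ in atTop, (n + 1) * (A * r ^ n + n) ≤ s ^ n := by
  have hr' : ‖r‖ < s := by rwa [norm_of_nonneg hr]
  have hlo : (fun n : ℕ => (n + 1) * (A * r ^ n + n)) =o[atTop] fun n => s ^ n :=
    (((isLittleO_pow_const_mul_const_pow_const_pow_of_norm_lt 1 hr').const_mul_left A).add
      ((isLittleO_pow_const_mul_const_pow_const_pow_of_norm_lt 0 hr').const_mul_left A)).add
      ((isLittleO_pow_const_const_pow_of_one_lt 2 hs).add
        (isLittleO_pow_const_const_pow_of_one_lt 1 hs)) |>.congr_left fun n => by ring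
  filter_upwards [hlo.bound one_pos] with n hn
  rw [one_mul, norm_of_nonneg (pow_nonneg (by linarith) n)] at hn
  exact (le_abs_self _).trans hn

noncomputable def lacunaryWeight (n : ℕ) : ℝ := exp (-((2 : ℝ) ^ n) ^ 2 / (n + 1))

theorem summable_lacunaryWeight_mul_exp {q : ℝ} (hq0 : 0 ≤ q) (hq : q < 4) (A : ℝ) :
    Summable fun n => lacunaryWeight n * exp (A * q ^ n) := by
  refine summable_exp_neg_nat.of_norm_bounded_eventually_nat ?_
  filter_upwards [eventually_succ_mul_le_pow hq0 hq (by norm_num) A] with n hn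
  have h4 : ((2 : ℝ) ^ n) ^ 2 = 4 ^ n := by rw [← pow_mul, mul_comm, pow_mul]; norm_num
  rw [← le_div_iff₀' (by positivity), ← h4] at hn
  rw [lacunaryWeight, ← exp_add, norm_of_nonneg (exp_nonneg _), exp_le_exp, neg_div]
  linarith

theorem summable_lacunaryWeight : Summable lacunaryWeight := by
  simpa using summable_lacunaryWeight_mul_exp le_rfl (by norm_num) 0

theorem tendsto_lacunaryWeight_mul_exp {a : ℝ} (ha : 0 < a) :
    Tendsto (fun n => lacunaryWeight n * exp (a * ((2 : ℝ) ^ n) ^ 2)) atTop atTop := by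
  have hsq : Tendsto (fun n : ℕ => ((2 : ℝ) ^ n) ^ 2) atTop atTop :=
    (tendsto_pow_atTop two_ne_zero).comp (tendsto_pow_atTop_atTop_of_one_lt one_lt_two)
  have hcoeff : Tendsto (fun n : ℕ => a - 1 / ((n : ℝ) + 1)) atTop (𝓝 a) := by
    simpa using (tendsto_const_nhds (x := a)).sub (tendsto_one_div_add_atTop_nhds_zero_nat (𝕜 := ℝ))
  refine (tendsto_exp_atTop.comp (hsq.atTop_mul_pos ha hcoeff)).congr fun n => ?_
  simp only [Function.comp, lacunaryWeight, ← exp_add]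
  ring_nf

noncomputable def lacunaryMass (n : ℕ) : ℝ := lacunaryWeight n / ∑' k, lacunaryWeight k

theorem tsum_lacunaryWeight_pos : 0 < ∑' n, lacunaryWeight n :=
  summable_lacunaryWeight.tsum_pos (fun _ => (exp_pos _).le) 0 (exp_pos _)

theorem lacunaryMass_nonneg (n : ℕ) : 0 ≤ lacunaryMass n :=
  div_nonneg (exp_pos _).le tsum_lacunaryWeight_pos.le

theorem hasSum_lacunaryMass : HasSum lacunaryMass 1 := by
  have h := summable_lacunaryWeight.hasSum.div_const (∑' k, lacunaryWeight k)
  rwa [div_self tsum_lacunaryWeight_pos.ne'] at h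

theorem eventually_exp_lt_lacunaryMass {a : ℝ} (ha : 0 < a) :
    ∀ᶠ n in atTop, exp (-(a * ((2 : ℝ) ^ n) ^ 2)) < lacunaryMass n := by
  filter_upwards [(tendsto_lacunaryWeight_mul_exp ha).eventually_gt_atTop
    (∑' k, lacunaryWeight k)] with n hn
  rw [lacunaryMass, lt_div_iff₀ tsum_lacunaryWeight_pos, exp_neg, inv_mul_lt_iff₀ (exp_pos _)]
  linarith

noncomputable def lacunaryMeasure : Measure ℝ :=
  discreteMeasure lacunaryMass fun n => (2 : ℝ) ^ n

instance : IsProbabilityMeasure lacunaryMeasure :=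
  isProbabilityMeasure_discreteMeasure lacunaryMass_nonneg hasSum_lacunaryMass

theorem integrable_exp_mul_abs_rpow_lacunaryMeasure (A : ℝ) {p : ℝ} (hp : p < 2) :
    Integrable (fun x => exp (A * |x| ^ p)) lacunaryMeasure := by
  refine integrable_discreteMeasure (Measurable.aestronglyMeasurable (by fun_prop))
    lacunaryMass_nonneg ?_
  have h2p : (2 : ℝ) ^ p < 4 :=
    calc (2 : ℝ) ^ p < 2 ^ (2 : ℝ) := rpow_lt_rpow_of_exponent_lt one_lt_two hp
      _ = 4 := by norm_num
  refine ((summable_lacunaryWeight_mul_exp (by positivity) h2p A).div_const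
    (∑' k, lacunaryWeight k)).congr fun n => ?_
  rw [norm_of_nonneg (exp_nonneg _), abs_of_pos (by positivity), ← rpow_pow_comm zero_le_two,
    lacunaryMass, div_mul_eq_mul_div]

theorem lintegral_exp_mul_sq_lacunaryMeasure {A : ℝ} (hA : 0 < A) :
    ∫⁻ x, ENNReal.ofReal (exp (A * x ^ 2)) ∂lacunaryMeasure = ⊤ :=
  lintegral_discreteMeasure_eq_top lacunaryMass_nonneg <|
    ((tendsto_lacunaryWeight_mul_exp hA).atTop_div_const tsum_lacunaryWeight_pos).congr
      fun n => by rw [lacunaryMass, div_mul_eq_mul_div]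

theorem two_pow_div_two_le_abs_sub (n k : ℕ) : (2 : ℝ) ^ n / 2 ≤ |3 * 2 ^ n / 2 - 2 ^ k| := by
  rcases le_or_gt k n with hkn | hnk
  · have : (2 : ℝ) ^ k ≤ 2 ^ n := pow_le_pow_right₀ one_le_two hkn
    exact le_abs.2 (Or.inl (by linarith))
  · have : (2 : ℝ) ^ (n + 1) ≤ 2 ^ k := pow_le_pow_right₀ one_le_two hnk
    rw [pow_succ] at this
    exact le_abs.2 (Or.inr (by linarith))

theorem lacunaryMass_le_integral_gaussianKernel {t : ℝ} (ht : 0 ≤ t) (n : ℕ) :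
    lacunaryMass n ≤ ∫ y, exp (-((2 : ℝ) ^ n - y) ^ 2 / (2 * t)) ∂lacunaryMeasure :=
  calc lacunaryMass n ≤ lacunaryMeasure.real {(2 : ℝ) ^ n} :=
        (ENNReal.ofReal_le_iff_le_toReal (measure_ne_top _ _)).1
          (ofReal_le_discreteMeasure_singleton n)
    _ ≤ _ := measureReal_singleton_le_integral_gaussianKernel ht _

theorem integral_gaussianKernel_lacunaryMeasure_le {t : ℝ} (ht : 0 ≤ t) (n : ℕ) :
    ∫ y, exp (-(3 * (2 : ℝ) ^ n / 2 - y) ^ 2 / (2 * t)) ∂lacunaryMeasure ≤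
      exp (-(1 / (8 * t) * ((2 : ℝ) ^ n) ^ 2)) := by
  have h := integral_gaussianKernel_le (μ := lacunaryMeasure) ht
    (by positivity : (0 : ℝ) ≤ 2 ^ n / 2) <|
    ae_mem_range_discreteMeasure.mono <| by
      rintro _ ⟨k, rfl⟩
      exact two_pow_div_two_le_abs_sub n k
  convert h using 2
  field_simp
  ring

theorem not_unimodal_gaussian_convolution_lacunaryMeasure {t : ℝ} (ht : 0 < t) :
    ¬ Unimodal fun x => ∫ y, exp (-(x - y) ^ 2 / (2 * t)) ∂lacunaryMeasure := by
  have h8 := eventually_exp_lt_lacunaryMass (by positivity : 0 < 1 / (8 * t))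
  have h32 := eventually_exp_lt_lacunaryMass (by positivity : 0 < 1 / (32 * t))
  obtain ⟨n, hn⟩ := eventually_atTop.1 (h8.and h32)
  -- `(2 ^ (n + 1)) ^ 2 / (32 * t) = (2 ^ n) ^ 2 / (8 * t)`, so both neighbouring atoms are heavy
  have hsucc : exp (-(1 / (8 * t) * ((2 : ℝ) ^ n) ^ 2)) < lacunaryMass (n + 1) := by
    convert (hn (n + 1) n.le_succ).2 using 3
    field_simp
    ring
  have hpos : (0 : ℝ) < 2 ^ n := by positivity
  refine not_unimodal_of_lt_of_lt (a := 2 ^ n) (b := 3 * 2 ^ n / 2) (c := 2 ^ (n + 1))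
    (by linarith) (by rw [pow_succ]; linarith) ?_ ?_
  · exact (integral_gaussianKernel_lacunaryMeasure_le ht.le n).trans_lt <|
      (hn n le_rfl).1.trans_le (lacunaryMass_le_integral_gaussianKernel ht.le n)
  · exact (integral_gaussianKernel_lacunaryMeasure_le ht.le n).trans_lt <|
      hsucc.trans_le (lacunaryMass_le_integral_gaussianKernel ht.le (n + 1))

theorem exists_measure_subgaussian_moments_gaussian_convolution_never_unimodal :
    ∃ μ : Measure ℝ, IsProbabilityMeasure μ ∧
      (∀ A : ℝ, 0 < A → ∀ p : ℝ, 0 < p → p < 2 →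
        Integrable (fun x : ℝ => Real.exp (A * |x| ^ p)) μ) ∧
      (∀ A : ℝ, 0 < A → ∫⁻ x, ENNReal.ofReal (Real.exp (A * x ^ 2)) ∂μ = ⊤) ∧
      (∀ t : ℝ, 0 < t →
        ¬ Unimodal (fun x => ∫ y, Real.exp (-(x - y) ^ 2 / (2 * t)) ∂μ)) :=
  ⟨lacunaryMeasure, inferInstance,
    fun A _ _ _ hp => integrable_exp_mul_abs_rpow_lacunaryMeasure A hp,
    fun _ hA => lintegral_exp_mul_sq_lacunaryMeasure hA,
    fun _ ht => not_unimodal_gaussian_convolution_lacunaryMeasure ht⟩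
end

section
/- For t > 0, the function f_t : ℝ → ℝ defined by f_t(x) = exp(-(x-1)²/(2t)) + exp(-(x+1)²/(2t)) is unimodal if and only if t ≥ 1. -/
/-!
Write `f_t(x) = 2 e^{-1/(2t)} e^{-x²/(2t)} cosh(x/t)`. Being even, `f_t` is unimodal iff it is
nonincreasing on `[0, ∞)`. There its derivative has the sign of `sinh(x/t) - x cosh(x/t)`, which
is `≤ 0` for `t ≥ 1` because `sinh u ≤ u cosh u` (compare the power series termwise). For `t < 1`,
put `y = 1 - t`: then `f_t(t y) / f_t(0) = e^{-t y²/2} cosh y > 1`, since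
`e^{t y²/2} < 1 / (1 - t y²/2) ≤ 1 + y²/2 ≤ cosh y`.
-/

open MeasureTheory Real Set Filter Topology

theorem Unimodal.apply_le_apply_zero {f : ℝ → ℝ} (hf : Unimodal f)
    (heven : ∀ x, f (-x) = f x) {s : ℝ} (hs : 0 ≤ s) : f s ≤ f 0 := by
  obtain ⟨a, hmono, hanti⟩ := hf
  rcases le_or_gt 0 a with ha | ha
  · rw [← heven]
    exact hmono (mem_Iic.2 (by linarith)) ha (by linarith)
  · exact hanti ha.le (mem_Ici.2 (by linarith)) hs

theorem unimodal_of_antitoneOn_Ici_zero {f : ℝ → ℝ} (heven : ∀ x, f (-x) = f x)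
    (hf : AntitoneOn f (Ici 0)) : Unimodal f := by
  refine ⟨0, fun u hu v hv huv => ?_, hf⟩
  rw [← heven u, ← heven v]
  exact hf (mem_Ici.2 (neg_nonneg.2 hv)) (mem_Ici.2 (neg_nonneg.2 hu)) (neg_le_neg huv)

theorem Unimodal.const_mul {f : ℝ → ℝ} (hf : Unimodal f) {c : ℝ} (hc : 0 ≤ c) :
    Unimodal fun x => c * f x := by
  obtain ⟨a, hmono, hanti⟩ := hf
  exact ⟨a, fun u hu v hv huv => mul_le_mul_of_nonneg_left (hmono hu hv huv) hc,
    fun u hu v hv huv => mul_le_mul_of_nonneg_left (hanti hu hv huv) hc⟩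

namespace Real

theorem one_add_sq_div_two_le_cosh (x : ℝ) : 1 + x ^ 2 / 2 ≤ cosh x := by
  have := sum_le_hasSum (Finset.range 2) (fun n _ => by rw [pow_mul]; positivity) (hasSum_cosh x)
  simpa [Finset.sum_range_succ] using this

theorem sinh_le_mul_cosh {x : ℝ} (hx : 0 ≤ x) : sinh x ≤ x * cosh x := by
  refine hasSum_le (fun n => ?_) (hasSum_sinh x) ((hasSum_cosh x).mul_left x)
  rw [← mul_div_assoc, ← pow_succ']
  gcongr
  omega

theorem exp_lt_cosh {t x : ℝ} (ht : 0 < t) (hx : x ≠ 0) (h : t * x ^ 2 / 2 < 1 - t) :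
    exp (t * x ^ 2 / 2) < cosh x := by
  have hs : t * x ^ 2 / 2 < 1 := by linarith
  calc exp (t * x ^ 2 / 2) < 1 / (1 - t * x ^ 2 / 2) :=
        exp_bound_div_one_sub_of_interval' (by positivity) hs
    _ ≤ 1 + x ^ 2 / 2 := by
        rw [div_le_iff₀ (by linarith)]
        have : 0 < x ^ 2 := by positivity
        nlinarith
    _ ≤ cosh x := one_add_sq_div_two_le_cosh x

end Real

noncomputable def gaussCosh (t x : ℝ) : ℝ := exp (-x ^ 2 / (2 * t)) * cosh (x / t)

theorem gaussCosh_neg (t x : ℝ) : gaussCosh t (-x) = gaussCosh t x := by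
  simp [gaussCosh, neg_div]

theorem exp_add_exp_eq_gaussCosh (t x : ℝ) :
    exp (-(x - 1) ^ 2 / (2 * t)) + exp (-(x + 1) ^ 2 / (2 * t)) =
      2 * exp (-1 / (2 * t)) * gaussCosh t x := by
  calc _ = exp (-1 / (2 * t) + (-x ^ 2 / (2 * t) + x / t)) +
        exp (-1 / (2 * t) + (-x ^ 2 / (2 * t) + -(x / t))) := by
        congr 1 <;> congr 1 <;> ring
    _ = _ := by
        simp only [gaussCosh, cosh_eq, exp_add]
        ring

theorem hasDerivAt_gaussCosh (t x : ℝ) :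
    HasDerivAt (gaussCosh t)
      (exp (-x ^ 2 / (2 * t)) * (sinh (x / t) - x * cosh (x / t)) / t) x := by
  have hquad : HasDerivAt (fun x => -x ^ 2 / (2 * t)) (-x / t) x :=
    ((hasDerivAt_pow 2 x).neg.div_const (2 * t)).congr_deriv (by push_cast; ring)
  exact (hquad.exp.mul ((hasDerivAt_id x).div_const t).cosh).congr_deriv (by simp only [id]; ring)

theorem antitoneOn_gaussCosh {t : ℝ} (ht : 1 ≤ t) : AntitoneOn (gaussCosh t) (Ici 0) := by
  refine antitoneOn_of_hasDerivWithinAt_nonpos (convex_Ici 0)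
    (fun x _ => (hasDerivAt_gaussCosh t x).continuousAt.continuousWithinAt)
    (fun x _ => (hasDerivAt_gaussCosh t x).hasDerivWithinAt) fun x hx => ?_
  rw [interior_Ici] at hx
  have ht0 : 0 < t := by linarith
  have hxt : x / t ≤ x := div_le_self hx.out.le ht
  have hsinh : sinh (x / t) ≤ x * cosh (x / t) :=
    (sinh_le_mul_cosh (div_nonneg hx.out.le ht0.le)).trans
      (mul_le_mul_of_nonneg_right hxt (cosh_pos _).le)
  exact div_nonpos_of_nonpos_of_nonneg
    (mul_nonpos_of_nonneg_of_nonpos (exp_pos _).le (by linarith)) ht0.le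

theorem gaussCosh_zero_lt {t : ℝ} (ht0 : 0 < t) (ht1 : t < 1) :
    gaussCosh t 0 < gaussCosh t (t * (1 - t)) := by
  have hx : t * (1 - t) ^ 2 / 2 < 1 - t := by nlinarith
  have key := exp_lt_cosh ht0 (by linarith : 1 - t ≠ 0) hx
  have heval : gaussCosh t (t * (1 - t)) = exp (-(t * (1 - t) ^ 2 / 2)) * cosh (1 - t) := by
    rw [gaussCosh, mul_div_cancel_left₀ _ ht0.ne']
    congr 2
    field_simp
  rw [heval, gaussCosh, exp_neg, ← div_eq_inv_mul, lt_div_iff₀ (exp_pos _)]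
  simpa using key

theorem bernoulli_gaussian_convolution_unimodal_iff (t : ℝ) (ht : 0 < t) :
    Unimodal (fun x : ℝ =>
      Real.exp (-(x - 1) ^ 2 / (2 * t)) + Real.exp (-(x + 1) ^ 2 / (2 * t))) ↔ 1 ≤ t := by
  have hc : 0 < 2 * exp (-1 / (2 * t)) := by positivity
  rw [funext (exp_add_exp_eq_gaussCosh t)]
  constructor
  · intro h
    by_contra! ht1
    have hle := h.apply_le_apply_zero (by simp [gaussCosh_neg]) (s := t * (1 - t)) (by nlinarith)
    exact (mul_lt_mul_of_pos_left (gaussCosh_zero_lt ht ht1) hc).not_ge hle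
  · intro ht1
    exact (unimodal_of_antitoneOn_Ici_zero (gaussCosh_neg t) (antitoneOn_gaussCosh ht1)).const_mul
      hc.le
end

section
/- Let μ be a Borel probability measure on ℝ such that β := ∫_ℝ |x|³ dμ(x) < ∞ (i.e. x ↦ |x|³ is μ-integrable). Then for every t > 0 with t ≥ 20·β^{1/3}, the function g_{μ,t}(x) = ∫_ℝ ((x-y)² + t²)⁻¹ dμ(y) is unimodal; consequently the convolution μ * C_t is unimodal for all such t. -/
open MeasureTheory Real Set Filter Topology

/-!
Write `g(x) = ∫ k(x - y) dμ(y)` with `k(u) = (u² + 1)⁻¹`, the case `t = 1`; then `g' = -2ψ` with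
`ψ(x) = ∫ s(x - y) dμ(y)`, `s(u) = u / (u² + 1)²`. Elementary pointwise bounds
`c - C|y|³ ≤ ±s(x - y)` and `c - C|y|³ ≤ s'(x - y)` integrate, once the third moment of `μ` is small, to: `ψ < 0` on
`(-∞, -1/2]`, `ψ > 0` on `[1/2, ∞)` and `ψ' > 0` on `[-1/2, 1/2]`. So `ψ` changes sign exactly once
and `g` is unimodal. A general `t` reduces to `t = 1` by pushing `μ` forward under `y ↦ y / t`,
which divides the third moment by `t³`; `t ≥ 20 β^{1/3}` makes it at most `1/8000`.
-/

noncomputable def cauchyKernel (u : ℝ) : ℝ := (u ^ 2 + 1)⁻¹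

noncomputable def cauchySlope (u : ℝ) : ℝ := u / (u ^ 2 + 1) ^ 2

noncomputable def cauchySlopeDeriv (u : ℝ) : ℝ := (1 - 3 * u ^ 2) / (u ^ 2 + 1) ^ 3

theorem hasDerivAt_cauchyKernel (u : ℝ) :
    HasDerivAt cauchyKernel (-2 * cauchySlope u) u := by
  have h : HasDerivAt (fun u : ℝ => u ^ 2 + 1) (2 * u) u := by
    simpa using (hasDerivAt_pow 2 u).add_const 1
  refine (h.inv (by positivity)).congr_deriv ?_
  rw [cauchySlope]
  field_simp

theorem hasDerivAt_cauchySlope (u : ℝ) :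
    HasDerivAt cauchySlope (cauchySlopeDeriv u) u := by
  have h : HasDerivAt (fun u : ℝ => (u ^ 2 + 1) ^ 2) (2 * (u ^ 2 + 1) * (2 * u)) u := by
    simpa using ((hasDerivAt_pow 2 u).add_const 1).fun_pow 2
  refine ((hasDerivAt_id' u).div h (by positivity)).congr_deriv ?_
  rw [cauchySlopeDeriv]
  field_simp
  ring

theorem cauchySlope_neg (u : ℝ) : cauchySlope (-u) = -cauchySlope u := by
  simp [cauchySlope, neg_div]

theorem abs_cauchyKernel_le (u : ℝ) : |cauchyKernel u| ≤ 1 := by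
  rw [cauchyKernel, abs_of_pos (by positivity)]
  exact inv_le_one_of_one_le₀ (by nlinarith [sq_nonneg u])

theorem abs_cauchySlope_le (u : ℝ) : |cauchySlope u| ≤ 1 / 2 := by
  have h1 : 1 ≤ u ^ 2 + 1 := by nlinarith [sq_nonneg u]
  rw [cauchySlope, abs_div, abs_of_pos (show (0:ℝ) < (u ^ 2 + 1) ^ 2 by positivity),
    div_le_iff₀ (by positivity)]
  nlinarith [sq_nonneg (|u| - 1), sq_abs u, abs_nonneg u]

theorem abs_cauchySlopeDeriv_le (u : ℝ) : |cauchySlopeDeriv u| ≤ 1 := by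
  rw [cauchySlopeDeriv, abs_div, abs_of_pos (show (0:ℝ) < (u ^ 2 + 1) ^ 3 by positivity),
    div_le_one (by positivity)]
  have hs := sq_nonneg u
  exact abs_le.2 ⟨by nlinarith [pow_nonneg hs 3, mul_nonneg hs hs],
    by nlinarith [pow_nonneg hs 3, mul_nonneg hs hs]⟩

theorem cauchySlope_pos {u : ℝ} (hu : 0 < u) : 0 < cauchySlope u := by
  unfold cauchySlope; positivity

theorem cauchySlope_div_le_cauchySlope {x u : ℝ} (hx : 0 ≤ x) (hxu : x / 2 ≤ u)
    (hux : u ≤ 3 * x / 2) :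
    cauchySlope x / 20 ≤ cauchySlope u := by
  have hU : u ^ 2 + 1 ≤ 9 / 4 * (x ^ 2 + 1) := by nlinarith
  have hU2 : (u ^ 2 + 1) ^ 2 ≤ 81 / 16 * (x ^ 2 + 1) ^ 2 := by
    nlinarith [mul_le_mul hU hU (by positivity) (by positivity)]
  rw [cauchySlope, cauchySlope, div_div, div_le_div_iff₀ (by positivity) (by positivity)]
  nlinarith [mul_le_mul_of_nonneg_left hU2 hx, mul_nonneg (sq_nonneg (x ^ 2 + 1)) hx]

theorem one_le_cauchySlope_mul_pow {x y : ℝ} (hx : 1 / 2 ≤ x) (hxy : x / 2 ≤ y) :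
    1 ≤ 200 * cauchySlope x * y ^ 3 := by
  have hy3 : (x / 2) ^ 3 ≤ y ^ 3 := pow_le_pow_left₀ (by linarith) hxy 3
  have hx2 : x ^ 2 + 1 ≤ 5 * x ^ 2 := by nlinarith
  have hx4 : (x ^ 2 + 1) ^ 2 ≤ 25 * x ^ 4 := by
    nlinarith [mul_le_mul hx2 hx2 (by positivity) (by positivity)]
  rw [cauchySlope, mul_comm, ← mul_assoc, ← mul_div_assoc, le_div_iff₀ (by positivity), one_mul]
  nlinarith [mul_le_mul_of_nonneg_left hy3 (by linarith : 0 ≤ 200 * x)]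

theorem cauchySlope_mul_le_cauchySlope_sub {x : ℝ} (hx : 1 / 2 ≤ x) (y : ℝ) :
    cauchySlope x * (1 / 20 - 200 * |y| ^ 3) ≤ cauchySlope (x - y) := by
  have hGx : 0 ≤ cauchySlope x := (cauchySlope_pos (by linarith)).le
  have hy3 := pow_nonneg (abs_nonneg y) 3
  rcases le_or_gt |y| (1 / 4) with hy | hy
  · obtain ⟨hy₁, hy₂⟩ := abs_le.1 hy
    have := cauchySlope_div_le_cauchySlope (x := x) (u := x - y) (by linarith) (by linarith)
      (by linarith)
    nlinarith [mul_nonneg hGx hy3]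
  rcases le_or_gt y (x / 2) with hyx | hyx
  · have : 1 / 20 ≤ 200 * |y| ^ 3 := by nlinarith [pow_le_pow_left₀ (by norm_num) hy.le 3]
    calc _ ≤ 0 := mul_nonpos_of_nonneg_of_nonpos hGx (by linarith)
      _ ≤ _ := (cauchySlope_pos (by linarith)).le
  · have hbig := one_le_cauchySlope_mul_pow hx hyx.le
    rw [abs_of_pos (by linarith : 0 < y)]
    have h₁ := abs_le.1 (abs_cauchySlope_le (x - y))
    have h₂ := abs_le.1 (abs_cauchySlope_le x)
    nlinarith

theorem cauchySlope_sub_le_cauchySlope_mul {x : ℝ} (hx : x ≤ -(1 / 2)) (y : ℝ) :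
    cauchySlope (x - y) ≤ cauchySlope x * (1 / 20 - 200 * |y| ^ 3) := by
  have := cauchySlope_mul_le_cauchySlope_sub (x := -x) (by linarith) (-y)
  rw [show -x - -y = -(x - y) by ring, cauchySlope_neg, cauchySlope_neg, abs_neg] at this
  linarith

theorem one_div_25_le_cauchySlopeDeriv {a : ℝ} (ha : |a| ≤ 11 / 20) :
    1 / 25 ≤ cauchySlopeDeriv a := by
  have h : a ^ 2 ≤ (11 / 20) ^ 2 := by rw [← sq_abs]; exact pow_le_pow_left₀ (abs_nonneg a) ha 2
  rw [cauchySlopeDeriv, le_div_iff₀ (by positivity)]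
  nlinarith [sq_nonneg a, sq_nonneg (a ^ 2)]

theorem sub_le_cauchySlopeDeriv {a : ℝ} (ha : 11 / 20 ≤ a) :
    1 / 25 - 200 * (a - 1 / 2) ^ 3 ≤ cauchySlopeDeriv a := by
  have h : 0 ≤ a - 11 / 20 := by linarith
  rw [cauchySlopeDeriv, le_div_iff₀ (by positivity)]
  nlinarith [mul_nonneg (mul_nonneg h h) h,
    mul_nonneg (mul_nonneg (mul_nonneg h h) h) (sq_nonneg (a ^ 2 + 1)),
    mul_nonneg h (sq_nonneg (a ^ 2 - 1)), mul_nonneg (mul_nonneg h h) (sq_nonneg a)]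

theorem cauchySlopeDeriv_abs (u : ℝ) : cauchySlopeDeriv |u| = cauchySlopeDeriv u := by
  simp only [cauchySlopeDeriv, sq_abs]

theorem sub_le_cauchySlopeDeriv_sub {x : ℝ} (hx : |x| ≤ 1 / 2) (y : ℝ) :
    1 / 25 - 200 * |y| ^ 3 ≤ cauchySlopeDeriv (x - y) := by
  have hxy : |x - y| ≤ |y| + 1 / 2 := by linarith [abs_sub x y]
  rw [← cauchySlopeDeriv_abs]
  rcases le_or_gt |x - y| (11 / 20) with h | h
  · have := one_div_25_le_cauchySlopeDeriv (a := |x - y|) (by rwa [abs_abs])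
    nlinarith [pow_nonneg (abs_nonneg y) 3]
  · have := sub_le_cauchySlopeDeriv h.le
    nlinarith [pow_le_pow_left₀ (by linarith) (by linarith : |x - y| - 1 / 2 ≤ |y|) 3]

theorem integrable_comp_sub_of_abs_le {μ : Measure ℝ} [IsFiniteMeasure μ] {F : ℝ → ℝ}
    (hF : Measurable F) {M : ℝ} (hFM : ∀ u, |F u| ≤ M) (x : ℝ) :
    Integrable (fun y => F (x - y)) μ :=
  Integrable.of_bound (hF.comp (measurable_const.sub measurable_id)).aestronglyMeasurable M
    (ae_of_all _ fun _ => hFM _)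

theorem hasDerivAt_integral_comp_sub_s6 {μ : Measure ℝ} [IsFiniteMeasure μ] {F F' : ℝ → ℝ}
    (hF : ∀ u, HasDerivAt F (F' u) u) {M C : ℝ} (hFM : ∀ u, |F u| ≤ M) (hF'C : ∀ u, |F' u| ≤ C)
    (x : ℝ) : HasDerivAt (fun x => ∫ y, F (x - y) ∂μ) (∫ y, F' (x - y) ∂μ) x := by
  have hFc : Continuous F := continuous_iff_continuousAt.2 fun u => (hF u).continuousAt
  have hF'm : Measurable F' := by
    rw [show F' = deriv F from funext fun u => (hF u).deriv.symm]
    exact measurable_deriv F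
  refine (hasDerivAt_integral_of_dominated_loc_of_deriv_le (F' := fun z y => F' (z - y))
    (bound := fun _ => C) univ_mem
    (Eventually.of_forall fun z => (integrable_comp_sub_of_abs_le hFc.measurable hFM z).1)
    (integrable_comp_sub_of_abs_le hFc.measurable hFM x)
    (integrable_comp_sub_of_abs_le hF'm hF'C x).1
    (ae_of_all _ fun _ _ _ => hF'C _) (integrable_const C)
    (ae_of_all _ fun y z _ => (hF (z - y)).comp_sub_const z y)).2

theorem integral_pos_of_sub_mul_moment_le {μ : Measure ℝ} [IsProbabilityMeasure μ] {n : ℕ}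
    (hμ : Integrable (fun y => |y| ^ n) μ) {f : ℝ → ℝ} (hf : Integrable f μ) {a b : ℝ}
    (hfab : ∀ y, a - b * |y| ^ n ≤ f y) (hab : b * ∫ y, |y| ^ n ∂μ < a) :
    0 < ∫ y, f y ∂μ :=
  calc 0 < a - b * ∫ y, |y| ^ n ∂μ := by linarith
    _ = ∫ y, (a - b * |y| ^ n) ∂μ := by
      rw [integral_sub (integrable_const a) (hμ.const_mul b), integral_const_mul]
      simp
    _ ≤ ∫ y, f y ∂μ := integral_mono ((integrable_const a).sub (hμ.const_mul b)) hf hfab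

theorem exists_forall_neg_forall_pos {ψ : ℝ → ℝ} (hψ : Continuous ψ) {l r : ℝ} (hlr : l ≤ r)
    (hl : ∀ x ≤ l, ψ x < 0) (hr : ∀ x, r ≤ x → 0 < ψ x) (hmono : StrictMonoOn ψ (Icc l r)) :
    ∃ a, (∀ x < a, ψ x < 0) ∧ ∀ x, a < x → 0 < ψ x := by
  obtain ⟨a, ha, ha0⟩ := intermediate_value_Icc hlr hψ.continuousOn
    ⟨(hl l le_rfl).le, (hr r le_rfl).le⟩
  refine ⟨a, fun x hxa => ?_, fun x hxa => ?_⟩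
  · rcases le_or_gt x l with hxl | hxl
    · exact hl x hxl
    · exact ha0 ▸ hmono ⟨hxl.le, by linarith [ha.2]⟩ ha hxa
  · rcases le_or_gt r x with hxr | hxr
    · exact hr x hxr
    · exact ha0 ▸ hmono ha ⟨by linarith [ha.1], hxr.le⟩ hxa

theorem unimodal_of_hasDerivAt_s6 {f f' : ℝ → ℝ} (hf : ∀ x, HasDerivAt f (f' x) x) (a : ℝ)
    (hl : ∀ x < a, 0 ≤ f' x) (hr : ∀ x, a < x → f' x ≤ 0) : Unimodal f := by
  have hd : Differentiable ℝ f := fun x => (hf x).differentiableAt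
  refine ⟨a, monotoneOn_of_deriv_nonneg (convex_Iic a) hd.continuous.continuousOn
    hd.differentiableOn fun x hx => ?_, antitoneOn_of_deriv_nonpos (convex_Ici a)
    hd.continuous.continuousOn hd.differentiableOn fun x hx => ?_⟩
  · rw [interior_Iic] at hx
    exact (hf x).deriv ▸ hl x hx
  · rw [interior_Ici] at hx
    exact (hf x).deriv ▸ hr x hx

section ThirdMoment

variable {μ : Measure ℝ} [IsProbabilityMeasure μ] (hμ : Integrable (fun y => |y| ^ 3) μ)
include hμ

theorem integral_cauchySlope_sub_pos (hβ : ∫ y, |y| ^ 3 ∂μ < 1 / 4000) {x : ℝ} (hx : 1 / 2 ≤ x) :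
    0 < ∫ y, cauchySlope (x - y) ∂μ := by
  have hGx : 0 < cauchySlope x := cauchySlope_pos (by linarith)
  refine integral_pos_of_sub_mul_moment_le hμ
    (integrable_comp_sub_of_abs_le (by unfold cauchySlope; fun_prop) abs_cauchySlope_le x)
    (a := cauchySlope x / 20) (b := 200 * cauchySlope x) (fun y => ?_) (by nlinarith)
  linarith [cauchySlope_mul_le_cauchySlope_sub hx y]

theorem integral_cauchySlope_sub_neg (hβ : ∫ y, |y| ^ 3 ∂μ < 1 / 4000) {x : ℝ}
    (hx : x ≤ -(1 / 2)) : ∫ y, cauchySlope (x - y) ∂μ < 0 := by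
  have hGx : cauchySlope x < 0 := by
    rw [← neg_neg x, cauchySlope_neg]
    exact neg_neg_of_pos (cauchySlope_pos (by linarith))
  rw [← neg_pos, ← integral_neg]
  refine integral_pos_of_sub_mul_moment_le hμ
    (integrable_comp_sub_of_abs_le (by unfold cauchySlope; fun_prop) abs_cauchySlope_le x).neg
    (a := -cauchySlope x / 20) (b := -200 * cauchySlope x) (fun y => ?_) (by nlinarith)
  linarith [cauchySlope_sub_le_cauchySlope_mul hx y]

theorem integral_cauchySlopeDeriv_sub_pos (hβ : ∫ y, |y| ^ 3 ∂μ < 1 / 5000) {x : ℝ}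
    (hx : |x| ≤ 1 / 2) : 0 < ∫ y, cauchySlopeDeriv (x - y) ∂μ :=
  integral_pos_of_sub_mul_moment_le hμ
    (integrable_comp_sub_of_abs_le (by unfold cauchySlopeDeriv; fun_prop)
      abs_cauchySlopeDeriv_le x)
    (sub_le_cauchySlopeDeriv_sub hx) (by linarith)

theorem unimodal_integral_cauchyKernel (hβ : ∫ y, |y| ^ 3 ∂μ < 1 / 5000) :
    Unimodal fun x => ∫ y, cauchyKernel (x - y) ∂μ := by
  set ψ := fun x => ∫ y, cauchySlope (x - y) ∂μ
  have hg (x : ℝ) : HasDerivAt (fun x => ∫ y, cauchyKernel (x - y) ∂μ) (-2 * ψ x) x := by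
    simpa only [ψ, ← integral_const_mul] using
      hasDerivAt_integral_comp_sub_s6 hasDerivAt_cauchyKernel abs_cauchyKernel_le (C := 1)
        (fun u => by rw [abs_mul, abs_neg, abs_two]; linarith [abs_cauchySlope_le u]) x
  have hψ (x : ℝ) : HasDerivAt ψ (∫ y, cauchySlopeDeriv (x - y) ∂μ) x :=
    hasDerivAt_integral_comp_sub_s6 hasDerivAt_cauchySlope abs_cauchySlope_le
      abs_cauchySlopeDeriv_le x
  have hψc : Continuous ψ := continuous_iff_continuousAt.2 fun x => (hψ x).continuousAt
  have hmono : StrictMonoOn ψ (Icc (-(1 / 2)) (1 / 2)) := by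
    refine strictMonoOn_of_deriv_pos (convex_Icc _ _) hψc.continuousOn fun x hx => ?_
    rw [interior_Icc] at hx
    rw [(hψ x).deriv]
    exact integral_cauchySlopeDeriv_sub_pos hμ hβ (abs_le.2 ⟨hx.1.le, hx.2.le⟩)
  obtain ⟨a, hl, hr⟩ := exists_forall_neg_forall_pos hψc (by norm_num)
    (fun x => integral_cauchySlope_sub_neg hμ (by linarith))
    (fun x => integral_cauchySlope_sub_pos hμ (by linarith)) hmono
  exact unimodal_of_hasDerivAt_s6 hg a (fun x hx => by linarith [hl x hx])
    fun x hx => by linarith [hr x hx]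

end ThirdMoment

theorem Unimodal.const_mul_comp_div {f : ℝ → ℝ} (hf : Unimodal f) {c t : ℝ} (hc : 0 ≤ c)
    (ht : 0 < t) : Unimodal fun x => c * f (x / t) := by
  obtain ⟨a, hmono, hanti⟩ := hf
  refine ⟨a * t, fun x hx y hy hxy => ?_, fun x hx y hy hxy => ?_⟩
  · exact mul_le_mul_of_nonneg_left (hmono ((div_le_iff₀ ht).2 hx) ((div_le_iff₀ ht).2 hy)
      (div_le_div_of_nonneg_right hxy ht.le)) hc
  · exact mul_le_mul_of_nonneg_left (hanti ((le_div_iff₀ ht).2 hx) ((le_div_iff₀ ht).2 hy)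
      (div_le_div_of_nonneg_right hxy ht.le)) hc

theorem integrable_abs_pow_map_div {μ : Measure ℝ} {n : ℕ}
    (hμ : Integrable (fun y => |y| ^ n) μ) (t : ℝ) :
    Integrable (fun z => |z| ^ n) (μ.map (· / t)) := by
  rw [integrable_map_measure (by fun_prop) (by fun_prop)]
  simpa only [Function.comp_def, abs_div, div_pow] using hμ.div_const (|t| ^ n)

theorem integral_abs_pow_map_div (μ : Measure ℝ) (n : ℕ) (t : ℝ) :
    ∫ z, |z| ^ n ∂(μ.map (· / t)) = (∫ y, |y| ^ n ∂μ) / |t| ^ n := by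
  rw [integral_map (by fun_prop) (by fun_prop), ← integral_div]
  simp only [abs_div, div_pow]

theorem integral_inv_sq_add_sq_eq_integral_map (μ : Measure ℝ) {t : ℝ} (ht : 0 < t) (x : ℝ) :
    ∫ y, ((x - y) ^ 2 + t ^ 2)⁻¹ ∂μ =
      (t ^ 2)⁻¹ * ∫ z, cauchyKernel (x / t - z) ∂(μ.map (· / t)) := by
  rw [integral_map (by fun_prop) (by unfold cauchyKernel; fun_prop), ← integral_const_mul]
  congr 1 with y
  rw [cauchyKernel]
  field_simp

theorem cauchy_convolution_unimodal_large_time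
    (μ : Measure ℝ) [IsProbabilityMeasure μ]
    (hint : Integrable (fun x : ℝ => |x| ^ 3) μ)
    (β : ℝ) (hβ : β = ∫ x, |x| ^ 3 ∂μ)
    (t : ℝ) (ht0 : 0 < t) (ht : 20 * β ^ ((1 : ℝ) / 3) ≤ t) :
    Unimodal (fun x => ∫ y, ((x - y) ^ 2 + t ^ 2)⁻¹ ∂μ) := by
  have hβ0 : 0 ≤ β := hβ ▸ integral_nonneg fun x => by positivity
  have hβt : 8000 * β ≤ t ^ 3 := by
    have h := pow_le_pow_left₀ (by positivity) (show β ^ ((1 : ℝ) / 3) ≤ t / 20 by linarith) 3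
    rw [show (1 : ℝ) / 3 = ((3 : ℕ) : ℝ)⁻¹ by norm_num,
      Real.rpow_inv_natCast_pow hβ0 three_ne_zero] at h
    linarith
  have : IsProbabilityMeasure (μ.map (· / t)) := Measure.isProbabilityMeasure_map (by fun_prop)
  have key := unimodal_integral_cauchyKernel (integrable_abs_pow_map_div hint t) (by
    rw [integral_abs_pow_map_div, ← hβ, abs_of_pos ht0, div_lt_iff₀ (by positivity)]
    linarith [pow_pos ht0 3])
  simpa only [integral_inv_sq_add_sq_eq_integral_map μ ht0] using
    key.const_mul_comp_div (inv_nonneg.2 (sq_nonneg t)) ht0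
end

section
/- Let μ be a Borel probability measure on ℝ such that β := ∫_ℝ |x|³ dμ(x) < ∞. Then for every t > 0 with t ≥ 20·β^{1/3}, the function g_{μ,t}(x) = ∫_ℝ ((x-y)² + t²)⁻¹ dμ(y) is differentiable on ℝ, and its derivative satisfies g_{μ,t}'(x) < 0 for every x ≥ t/4 and g_{μ,t}'(x) > 0 for every x ≤ -t/4. -/
/-!
The derivative of `x ↦ ((x - y) ^ 2 + t ^ 2)⁻¹` is `-2 K(x - y)` with `K u = u / (u ^ 2 + t ^ 2) ^ 2`,
so it suffices to show `∫ K(x - y) dμ(y) > 0` for `x ≥ t / 4` (the case `x ≤ -t / 4` follows by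
reflecting `μ`). For `|y| ≤ x / 2` the kernel is bounded below by a positive constant of order
`x⁻³`, while everywhere `|K| ≤ 1 / (2 t³)`. By Markov's inequality the mass of `{|y| > x / 2}` is
at most `8 β / x³`, and `t ≥ 20 β^{1/3}` makes this mass too small to cancel the main term.
-/

open MeasureTheory Real Set Filter Topology

lemma abs_div_sq_add_sq_sq_le {t : ℝ} (ht : 0 < t) (u : ℝ) :
    |u / (u ^ 2 + t ^ 2) ^ 2| ≤ 1 / (2 * t ^ 3) := by
  rw [abs_div, abs_of_pos (by positivity : (0 : ℝ) < (u ^ 2 + t ^ 2) ^ 2),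
    div_le_div_iff₀ (by positivity) (by positivity)]
  nlinarith [sq_nonneg (|u| - t), mul_pos ht ht, sq_abs u, abs_nonneg u]

lemma continuous_div_sq_add_sq_sq {t : ℝ} (ht : t ≠ 0) (x : ℝ) :
    Continuous fun y : ℝ => (x - y) / ((x - y) ^ 2 + t ^ 2) ^ 2 :=
  (continuous_const.sub continuous_id).div (by fun_prop) fun y => by positivity

lemma integrable_div_sq_add_sq_sq (μ : Measure ℝ) [IsFiniteMeasure μ] {t : ℝ} (ht : 0 < t)
    (x : ℝ) : Integrable (fun y : ℝ => (x - y) / ((x - y) ^ 2 + t ^ 2) ^ 2) μ :=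
  (integrable_const (1 / (2 * t ^ 3))).mono'
    (continuous_div_sq_add_sq_sq ht.ne' x).aestronglyMeasurable
    (Eventually.of_forall fun y => abs_div_sq_add_sq_sq_le ht (x - y))

lemma hasDerivAt_inv_sq_add_sq {t : ℝ} (ht : t ≠ 0) (y x : ℝ) :
    HasDerivAt (fun x : ℝ => ((x - y) ^ 2 + t ^ 2)⁻¹)
      (-2 * ((x - y) / ((x - y) ^ 2 + t ^ 2) ^ 2)) x := by
  have h : HasDerivAt (fun x : ℝ => (x - y) ^ 2 + t ^ 2) (2 * (x - y)) x := by
    simpa using (((hasDerivAt_id x).sub_const y).pow 2).add_const (t ^ 2)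
  exact (h.inv (by positivity)).congr_deriv (by ring)

lemma hasDerivAt_integral_inv_sq_add_sq (μ : Measure ℝ) [IsFiniteMeasure μ] {t : ℝ}
    (ht : 0 < t) (x : ℝ) :
    HasDerivAt (fun x : ℝ => ∫ y, ((x - y) ^ 2 + t ^ 2)⁻¹ ∂μ)
      (-2 * ∫ y, (x - y) / ((x - y) ^ 2 + t ^ 2) ^ 2 ∂μ) x := by
  have hmeas : ∀ x' : ℝ, AEStronglyMeasurable (fun y : ℝ => ((x' - y) ^ 2 + t ^ 2)⁻¹) μ :=
    fun x' => (Continuous.inv₀ (by fun_prop) fun y => by positivity).aestronglyMeasurable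
  have hint : Integrable (fun y : ℝ => ((x - y) ^ 2 + t ^ 2)⁻¹) μ :=
    (integrable_const (t ^ 2)⁻¹).mono' (hmeas x) <| Eventually.of_forall fun y => by
      rw [Real.norm_eq_abs, abs_of_pos (by positivity)]
      exact inv_anti₀ (by positivity) (by nlinarith [sq_nonneg (x - y)])
  have hbound : ∀ y x' : ℝ, ‖-2 * ((x' - y) / ((x' - y) ^ 2 + t ^ 2) ^ 2)‖ ≤ 1 / t ^ 3 := by
    intro y x'
    rw [norm_mul, Real.norm_eq_abs, Real.norm_eq_abs, abs_neg, abs_two]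
    calc 2 * |(x' - y) / ((x' - y) ^ 2 + t ^ 2) ^ 2| ≤ 2 * (1 / (2 * t ^ 3)) := by
          gcongr; exact abs_div_sq_add_sq_sq_le ht (x' - y)
      _ = 1 / t ^ 3 := by field_simp
  have key := hasDerivAt_integral_of_dominated_loc_of_deriv_le (μ := μ) (x₀ := x)
    (F' := fun x y => -2 * ((x - y) / ((x - y) ^ 2 + t ^ 2) ^ 2)) univ_mem
    (Eventually.of_forall hmeas) hint
    ((continuous_const.mul (continuous_div_sq_add_sq_sq ht.ne' x)).aestronglyMeasurable)
    (Eventually.of_forall fun y x' _ => hbound y x') (integrable_const _)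
    (Eventually.of_forall fun y x' _ => hasDerivAt_inv_sq_add_sq ht.ne' y x')
  rw [integral_const_mul] at key
  exact key.2

/-- Markov's inequality in pointwise form: `f ≥ c - (c + M) |y|ᵖ / rᵖ` everywhere. -/
lemma sub_mul_moment_div_le_integral {μ : Measure ℝ} [IsProbabilityMeasure μ] {p : ℕ}
    (hmom : Integrable (fun y : ℝ => |y| ^ p) μ) {f : ℝ → ℝ} (hf : Integrable f μ)
    {r c M : ℝ} (hr : 0 < r) (hcM : 0 ≤ c + M)
    (hnear : ∀ y, |y| ≤ r → c ≤ f y) (hfar : ∀ y, -M ≤ f y) :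
    c - (c + M) * ((∫ y, |y| ^ p ∂μ) / r ^ p) ≤ ∫ y, f y ∂μ := by
  have hpoint : ∀ y, c - (c + M) * (|y| ^ p / r ^ p) ≤ f y := by
    intro y
    rcases le_or_gt |y| r with hy | hy
    · have : 0 ≤ (c + M) * (|y| ^ p / r ^ p) := by positivity
      linarith [hnear y hy]
    · have : 1 ≤ |y| ^ p / r ^ p := by
        rw [one_le_div (by positivity)]
        exact pow_le_pow_left₀ hr.le hy.le p
      nlinarith [hfar y]
  calc c - (c + M) * ((∫ y, |y| ^ p ∂μ) / r ^ p)
      = ∫ y, (c - (c + M) * (|y| ^ p / r ^ p)) ∂μ := by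
        rw [integral_sub (integrable_const c) ((hmom.div_const _).const_mul _),
          integral_const_mul, integral_div, integral_const, probReal_univ, one_smul]
    _ ≤ ∫ y, f y ∂μ :=
        integral_mono ((integrable_const c).sub ((hmom.div_const _).const_mul _)) hf hpoint

lemma le_div_sq_add_sq_sq_of_abs_le {x t y : ℝ} (hx : 0 < x) (hy : |y| ≤ x / 2) :
    x / 2 / ((3 * x / 2) ^ 2 + t ^ 2) ^ 2 ≤ (x - y) / ((x - y) ^ 2 + t ^ 2) ^ 2 := by
  obtain ⟨hy₁, hy₂⟩ := abs_le.mp hy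
  have hsq : (x - y) ^ 2 ≤ (3 * x / 2) ^ 2 := by nlinarith
  have hxy : 0 < x - y := by linarith
  calc x / 2 / ((3 * x / 2) ^ 2 + t ^ 2) ^ 2 ≤ x / 2 / ((x - y) ^ 2 + t ^ 2) ^ 2 := by
        gcongr
    _ ≤ (x - y) / ((x - y) ^ 2 + t ^ 2) ^ 2 := by gcongr; linarith

lemma cauchy_margin_pos {x t β : ℝ} (ht : 0 < t) (htx : t ≤ 4 * x) (hβ : β ≤ (t / 20) ^ 3) :
    0 < x / 2 / ((3 * x / 2) ^ 2 + t ^ 2) ^ 2 -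
      (x / 2 / ((3 * x / 2) ^ 2 + t ^ 2) ^ 2 + 1 / (2 * t ^ 3)) * (β / (x / 2) ^ 3) := by
  have hx : 0 < x := by linarith
  set c := x / 2 / ((3 * x / 2) ^ 2 + t ^ 2) ^ 2
  set m := β / (x / 2) ^ 3
  have ht3 : t ^ 3 ≤ 64 * x ^ 3 := by nlinarith [pow_le_pow_left₀ ht.le htx 3]
  have hm : m ≤ t ^ 3 / (1000 * x ^ 3) := by
    rw [div_le_div_iff₀ (by positivity) (by positivity)]; nlinarith [pow_pos hx 3]
  have hm' : m ≤ 8 / 125 := hm.trans <| by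
    rw [div_le_div_iff₀ (by positivity) (by positivity)]; nlinarith
  have hMm : 1 / (2 * t ^ 3) * m ≤ 1 / (2000 * x ^ 3) := by
    calc 1 / (2 * t ^ 3) * m ≤ 1 / (2 * t ^ 3) * (t ^ 3 / (1000 * x ^ 3)) := by gcongr
      _ = 1 / (2000 * x ^ 3) := by field_simp; ring
  have hc : 8 / (5329 * x ^ 3) ≤ c := by
    have hden : (3 * x / 2) ^ 2 + t ^ 2 ≤ 73 / 4 * x ^ 2 := by nlinarith
    calc 8 / (5329 * x ^ 3) = x / 2 / (73 / 4 * x ^ 2) ^ 2 := by field_simp; ring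
      _ ≤ x / 2 / ((3 * x / 2) ^ 2 + t ^ 2) ^ 2 := by gcongr
  have hcm : c * m ≤ c * (8 / 125) := by gcongr
  have : 1 / (2000 * x ^ 3) < 117 / 125 * (8 / (5329 * x ^ 3)) := by
    rw [← mul_div_assoc, div_lt_div_iff₀ (by positivity) (by positivity)]; nlinarith [pow_pos hx 3]
  nlinarith

lemma integral_div_sq_add_sq_sq_pos (μ : Measure ℝ) [IsProbabilityMeasure μ]
    (hint : Integrable (fun x : ℝ => |x| ^ 3) μ) {t : ℝ} (ht : 0 < t)
    (hβ : ∫ x, |x| ^ 3 ∂μ ≤ (t / 20) ^ 3) {x : ℝ} (hx : t / 4 ≤ x) :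
    0 < ∫ y, (x - y) / ((x - y) ^ 2 + t ^ 2) ^ 2 ∂μ := by
  have hx0 : 0 < x := by linarith
  refine (cauchy_margin_pos ht (by linarith) hβ).trans_le <|
    sub_mul_moment_div_le_integral hint (integrable_div_sq_add_sq_sq μ ht x) (by positivity)
      (by positivity) (fun y hy => le_div_sq_add_sq_sq_of_abs_le hx0 hy) fun y => ?_
  exact neg_le_of_abs_le (abs_div_sq_add_sq_sq_le ht (x - y))

lemma integral_div_sq_add_sq_sq_neg (μ : Measure ℝ) [IsProbabilityMeasure μ]
    (hint : Integrable (fun x : ℝ => |x| ^ 3) μ) {t : ℝ} (ht : 0 < t)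
    (hβ : ∫ x, |x| ^ 3 ∂μ ≤ (t / 20) ^ 3) {x : ℝ} (hx : x ≤ -(t / 4)) :
    ∫ y, (x - y) / ((x - y) ^ 2 + t ^ 2) ^ 2 ∂μ < 0 := by
  have hneg : MeasurableEmbedding (Neg.neg : ℝ → ℝ) := measurableEmbedding_neg
  have := Measure.isProbabilityMeasure_map (μ := μ) hneg.measurable.aemeasurable
  have hint' : Integrable (fun x : ℝ => |x| ^ 3) (μ.map Neg.neg) :=
    hneg.integrable_map_iff.2 (by simpa [Function.comp_def] using hint)
  have hβ' : ∫ x, |x| ^ 3 ∂(μ.map Neg.neg) ≤ (t / 20) ^ 3 := by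
    simpa [hneg.integral_map] using hβ
  have hpos := integral_div_sq_add_sq_sq_pos _ hint' ht hβ' (le_neg_of_le_neg hx)
  have hodd : ∀ y : ℝ, (-x - -y) / ((-x - -y) ^ 2 + t ^ 2) ^ 2 =
      -((x - y) / ((x - y) ^ 2 + t ^ 2) ^ 2) := fun y => by ring
  rw [hneg.integral_map] at hpos
  simp only [hodd, integral_neg] at hpos
  linarith

lemma le_div_pow_of_mul_rpow_le {β t : ℝ} (hβ : 0 ≤ β) (ht : 20 * β ^ ((1 : ℝ) / 3) ≤ t) :
    β ≤ (t / 20) ^ 3 := by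
  have h := (rpow_inv_le_iff_of_pos hβ (by linarith [rpow_nonneg hβ ((1 : ℝ) / 3)])
    (by norm_num : (0 : ℝ) < 3)).1 (by rw [← one_div]; linarith : β ^ (3 : ℝ)⁻¹ ≤ t / 20)
  exact_mod_cast h

theorem cauchy_convolution_deriv_sign_large_time
    (μ : Measure ℝ) [IsProbabilityMeasure μ]
    (hint : Integrable (fun x : ℝ => |x| ^ 3) μ)
    (β : ℝ) (hβ : β = ∫ x, |x| ^ 3 ∂μ)
    (t : ℝ) (ht0 : 0 < t) (ht : 20 * β ^ ((1 : ℝ) / 3) ≤ t) :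
    Differentiable ℝ (fun x : ℝ => ∫ y, ((x - y) ^ 2 + t ^ 2)⁻¹ ∂μ) ∧
    (∀ x : ℝ, t / 4 ≤ x →
      deriv (fun x : ℝ => ∫ y, ((x - y) ^ 2 + t ^ 2)⁻¹ ∂μ) x < 0) ∧
    (∀ x : ℝ, x ≤ -(t / 4) →
      0 < deriv (fun x : ℝ => ∫ y, ((x - y) ^ 2 + t ^ 2)⁻¹ ∂μ) x) := by
  have hβ0 : 0 ≤ β := hβ ▸ integral_nonneg fun y => by positivity
  have hmom : ∫ x, |x| ^ 3 ∂μ ≤ (t / 20) ^ 3 := hβ ▸ le_div_pow_of_mul_rpow_le hβ0 ht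
  have hderiv := hasDerivAt_integral_inv_sq_add_sq μ ht0
  refine ⟨fun x => (hderiv x).differentiableAt, fun x hx => ?_, fun x hx => ?_⟩
  · rw [(hderiv x).deriv]
    linarith [integral_div_sq_add_sq_sq_pos μ hint ht0 hmom hx]
  · rw [(hderiv x).deriv]
    linarith [integral_div_sq_add_sq_sq_neg μ hint ht0 hmom hx]
end

section
/- There exists a Borel probability measure μ on ℝ such that ∫_ℝ |x|^p dμ(x) < ∞ for every p with 0 < p < 3, and such that for every t > 0 the function g_{μ,t}(x) = ∫_ℝ ((x-y)² + t²)⁻¹ dμ(y) is not unimodal. -/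
/-!
Put weight proportional to `k⁶ / c_k³`, where `c_k = 2^(k²)`, on each of the two points `c_k ± k`.
Since `k⁶ c_k^p / c_k³ = k⁶ 2^(-(3-p)k²)`, all moments of order `p < 3` are finite.
Given `t > 0`, take `K ≥ 2t` large. The `K`-th cluster on its own makes `g_t(c_K ± K) - g_t(c_K)`
at least of order `K⁴ / c_K³`. Every other atom lies at distance `≥ c_K / 2` from
`[c_K - K, c_K + K]`, and there the kernel `((x - y)² + t²)⁻¹` varies by only `O(K / c_K³)`.
So `g_t(c_K) < g_t(c_K ± K)`: `g_t` dips at `c_K`, which a unimodal function cannot do.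
-/

open MeasureTheory Real Set Filter Topology

theorem not_unimodal_of_lt_of_lt_s9 {f : ℝ → ℝ} {u v w : ℝ} (huv : u < v) (hvw : v < w)
    (hu : f v < f u) (hw : f v < f w) : ¬ Unimodal f := by
  rintro ⟨a, hmono, hanti⟩
  rcases le_total v a with hva | hav
  · exact (hmono (huv.le.trans hva) hva huv.le).not_gt hu
  · exact (hanti hav (hav.trans hvw.le) hvw.le).not_gt hw

theorem sub_mul_le_of_hasSum {ι : Type*} {f c : ι → ℝ} {a C A B : ℝ} (hf : HasSum f a)
    (hc : HasSum c C) (j₀ : ι) (hB : 0 ≤ B) (hc₀ : 0 ≤ c j₀) (h₀ : A ≤ f j₀)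
    (hne : ∀ j ≠ j₀, -(B * c j) ≤ f j) : A - B * C ≤ a := by
  classical
  have hg := hc.mul_left (-B) |>.update j₀ A
  have hle : ∀ j, Function.update (fun j => -B * c j) j₀ A j ≤ f j := by
    intro j
    rcases eq_or_ne j j₀ with rfl | hj
    · simpa using h₀
    · simpa [hj] using hne j hj
  have := hasSum_le hle hg hf
  nlinarith [mul_nonneg hB hc₀]

theorem inv_sq_add_sq_sub_le (t : ℝ) {R u v : ℝ} (hR : 0 < R) (hu : R / 2 ≤ |u|)
    (hv : R / 2 ≤ |v|) : (v ^ 2 + t ^ 2)⁻¹ - (u ^ 2 + t ^ 2)⁻¹ ≤ 16 * |u - v| / R ^ 3 := by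
  have ha : 0 < |u| := by linarith
  have hb : 0 < |v| := by linarith
  have hdiff : u ^ 2 - v ^ 2 ≤ |u - v| * (|u| + |v|) := by
    calc u ^ 2 - v ^ 2 = (u - v) * (u + v) := by ring
      _ ≤ |(u - v) * (u + v)| := le_abs_self _
      _ ≤ |u - v| * (|u| + |v|) := by rw [abs_mul]; gcongr; exact abs_add_le u v
  have hden : |u| ^ 2 * |v| ^ 2 ≤ (u ^ 2 + t ^ 2) * (v ^ 2 + t ^ 2) := by
    rw [sq_abs, sq_abs]; gcongr <;> nlinarith [sq_nonneg t]
  have hR3 : (|u| + |v|) * R ^ 3 ≤ 16 * (|u| ^ 2 * |v| ^ 2) := by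
    have h1 : R ^ 3 ≤ 8 * (|u| * |v| ^ 2) := by
      calc R ^ 3 = R * R * R := by ring
        _ ≤ (2 * |u|) * (2 * |v|) * (2 * |v|) := by gcongr <;> linarith
        _ = _ := by ring
    have h2 : R ^ 3 ≤ 8 * (|u| ^ 2 * |v|) := by
      calc R ^ 3 = R * R * R := by ring
        _ ≤ (2 * |u|) * (2 * |u|) * (2 * |v|) := by gcongr <;> linarith
        _ = _ := by ring
    nlinarith
  have hA : 0 < u ^ 2 + t ^ 2 := by rw [← sq_abs]; positivity
  have hB : 0 < v ^ 2 + t ^ 2 := by rw [← sq_abs]; positivity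
  rw [inv_sub_inv hB.ne' hA.ne', div_le_div_iff₀ (by positivity) (by positivity)]
  calc (u ^ 2 + t ^ 2 - (v ^ 2 + t ^ 2)) * R ^ 3
      ≤ |u - v| * (|u| + |v|) * R ^ 3 := by gcongr; linarith
    _ ≤ |u - v| * (16 * (|u| ^ 2 * |v| ^ 2)) := by
        rw [mul_assoc]; exact mul_le_mul_of_nonneg_left hR3 (abs_nonneg _)
    _ ≤ 16 * |u - v| * ((v ^ 2 + t ^ 2) * (u ^ 2 + t ^ 2)) := by
        rw [mul_comm (v ^ 2 + t ^ 2)]; nlinarith [abs_nonneg (u - v)]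

theorem inv_sq_add_sq_sub_le_of_far (t : ℝ) {R s c x a : ℝ} (hR : 0 < R) (hx : |x - c| ≤ s)
    (ha : R / 2 + s ≤ |a - c|) :
    ((c - a) ^ 2 + t ^ 2)⁻¹ - ((x - a) ^ 2 + t ^ 2)⁻¹ ≤ 16 * s / R ^ 3 := by
  have hxa : R / 2 ≤ |x - a| := by
    have := abs_sub_abs_le_abs_sub (a - c) (x - c)
    rw [show a - c - (x - c) = a - x by ring] at this
    rw [abs_sub_comm x a]
    linarith
  have hca : R / 2 ≤ |c - a| := by rw [abs_sub_comm]; linarith [abs_nonneg (x - c)]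
  calc _ ≤ 16 * |x - a - (c - a)| / R ^ 3 := inv_sq_add_sq_sub_le t hR hxa hca
    _ ≤ 16 * s / R ^ 3 := by rw [show x - a - (c - a) = x - c by ring]; gcongr

theorem two_div_sq_le_inv_sq_add_sq_sub {t c s x : ℝ} (ht : 0 < t) (hs : 2 * t ≤ s)
    (hx : x = c - s ∨ x = c + s) :
    2 / s ^ 2 ≤ (((x - (c - s)) ^ 2 + t ^ 2)⁻¹ + ((x - (c + s)) ^ 2 + t ^ 2)⁻¹)
      - (((c - (c - s)) ^ 2 + t ^ 2)⁻¹ + ((c - (c + s)) ^ 2 + t ^ 2)⁻¹) := by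
  have hs0 : 0 < s := by linarith
  have h1 : 4 / s ^ 2 ≤ (t ^ 2)⁻¹ := by
    rw [div_le_iff₀ (by positivity), inv_mul_eq_div, le_div_iff₀ (by positivity)]; nlinarith
  have h2 : (s ^ 2 + t ^ 2)⁻¹ ≤ 1 / s ^ 2 := by
    rw [one_div]; exact inv_anti₀ (by positivity) (by nlinarith)
  have hpeak : (t ^ 2)⁻¹ ≤ ((x - (c - s)) ^ 2 + t ^ 2)⁻¹ + ((x - (c + s)) ^ 2 + t ^ 2)⁻¹ := by
    rcases hx with rfl | rfl <;> rw [sub_self, zero_pow two_ne_zero, zero_add]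
    exacts [le_add_of_nonneg_right (by positivity), le_add_of_nonneg_left (by positivity)]
  rw [show c - (c - s) = s by ring, show c - (c + s) = -s by ring, neg_sq]
  linarith [show 4 / s ^ 2 = 2 / s ^ 2 + 2 * (1 / s ^ 2) by ring]

section SumDiracPairs

variable {ι X : Type*} [MeasurableSpace X]

noncomputable def sumDiracPairs (w : ι → ℝ) (a b : ι → X) : Measure X :=
  Measure.sum fun i => ENNReal.ofReal (w i) • (Measure.dirac (a i) + Measure.dirac (b i))

variable {w : ι → ℝ} {a b : ι → X}

theorem isProbabilityMeasure_sumDiracPairs (hw : 0 ≤ w) (h : HasSum w (1 / 2)) :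
    IsProbabilityMeasure (sumDiracPairs w a b) := by
  constructor
  have h2 : HasSum (fun i => 2 * w i) 1 := by simpa using h.mul_left 2
  simp only [sumDiracPairs, Measure.sum_apply _ MeasurableSet.univ, Measure.smul_apply,
    Measure.add_apply, measure_univ, smul_eq_mul]
  calc ∑' i, ENNReal.ofReal (w i) * (1 + 1) = ∑' i, ENNReal.ofReal (2 * w i) := by
        congr 1 with i
        rw [ENNReal.ofReal_mul zero_le_two, mul_comm, one_add_one_eq_two, ENNReal.ofReal_ofNat]
    _ = 1 := by
        rw [← ENNReal.ofReal_tsum_of_nonneg (fun i => mul_nonneg zero_le_two (hw i)) h2.summable,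
          h2.tsum_eq, ENNReal.ofReal_one]

variable [MeasurableSingletonClass X]

theorem integral_smul_dirac_add_dirac (f : X → ℝ) {c : ℝ} (hc : 0 ≤ c) (x y : X) :
    ∫ z, f z ∂(ENNReal.ofReal c • (Measure.dirac x + Measure.dirac y)) = c * (f x + f y) := by
  rw [integral_smul_measure, integral_add_measure (integrable_dirac enorm_lt_top)
    (integrable_dirac enorm_lt_top), integral_dirac, integral_dirac, ENNReal.toReal_ofReal hc,
    smul_eq_mul]

theorem integrable_sumDiracPairs [Countable ι] {f : X → ℝ} (hw : 0 ≤ w)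
    (hf : Summable fun i => w i * (|f (a i)| + |f (b i)|)) :
    Integrable f (sumDiracPairs w a b) :=
  integrable_sum_measure (fun _ => ((integrable_dirac enorm_lt_top).add_measure
    (integrable_dirac enorm_lt_top)).smul_measure ENNReal.ofReal_ne_top)
    (by simpa only [integral_smul_dirac_add_dirac _ (hw _), Real.norm_eq_abs] using hf)

theorem hasSum_integral_sumDiracPairs {f : X → ℝ} (hw : 0 ≤ w)
    (hf : Integrable f (sumDiracPairs w a b)) :
    HasSum (fun i => w i * (f (a i) + f (b i))) (∫ x, f x ∂sumDiracPairs w a b) := by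
  unfold sumDiracPairs at hf ⊢
  simpa only [integral_smul_dirac_add_dirac _ (hw _)] using hasSum_integral_measure hf

end SumDiracPairs

theorem integrable_inv_sub_sq_add_sq {μ : Measure ℝ} [IsFiniteMeasure μ] {t : ℝ} (ht : t ≠ 0)
    (x : ℝ) : Integrable (fun y => ((x - y) ^ 2 + t ^ 2)⁻¹) μ := by
  refine .of_bound (by fun_prop) (t ^ 2)⁻¹ (ae_of_all _ fun y => ?_)
  have ht2 : 0 < t ^ 2 := by positivity
  rw [norm_inv, Real.norm_of_nonneg (by positivity)]
  exact inv_anti₀ ht2 (by nlinarith [sq_nonneg (x - y)])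

namespace CauchyNeverUnimodal

noncomputable section

def center (k : ℕ) : ℝ := 2 ^ (k ^ 2)

def mass (k : ℕ) : ℝ := k ^ 6 / center k ^ 3

theorem center_pos (k : ℕ) : 0 < center k := by unfold center; positivity

theorem mass_nonneg (k : ℕ) : 0 ≤ mass k := by unfold mass; have := center_pos k; positivity

theorem natCast_le_center (k : ℕ) : (k : ℝ) ≤ center k := by
  unfold center
  exact_mod_cast Nat.lt_two_pow_self.le.trans
    (Nat.pow_le_pow_right two_pos (Nat.le_self_pow two_ne_zero k))

theorem sixteen_mul_le_center {k : ℕ} (hk : 4 ≤ k) : 16 * (k : ℝ) ≤ center k := by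
  unfold center
  have h : 16 * k ≤ 2 ^ (k ^ 2) :=
    calc 16 * k ≤ 2 ^ 4 * 2 ^ k := Nat.mul_le_mul_left _ Nat.lt_two_pow_self.le
      _ = 2 ^ (k + 4) := by ring
      _ ≤ 2 ^ (k ^ 2) := Nat.pow_le_pow_right two_pos (by nlinarith)
  exact_mod_cast h

theorem mul_center_le_center {j k : ℕ} (hjk : j < k) (hk : 4 ≤ k) :
    128 * center j ≤ center k := by
  unfold center
  calc 128 * (2 : ℝ) ^ (j ^ 2) = 2 ^ (j ^ 2 + 7) := by ring
    _ ≤ 2 ^ (k ^ 2) := pow_le_pow_right₀ one_le_two (by nlinarith)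

theorem le_abs_sub_center {j K : ℕ} (hK : 4 ≤ K) (hjK : j ≠ K) {y : ℝ}
    (hy : |y - center j| ≤ j) : center K / 2 + K ≤ |y - center K| := by
  have hy' := abs_le.1 hy
  have hKc := sixteen_mul_le_center hK
  rcases hjK.lt_or_gt with hjK | hKj
  · have := mul_center_le_center hjK hK
    have := natCast_le_center j
    rw [abs_sub_comm]
    exact le_abs.2 (Or.inl (by linarith))
  · have := mul_center_le_center hKj (hK.trans hKj.le)
    have := sixteen_mul_le_center (hK.trans hKj.le)
    exact le_abs.2 (Or.inl (by linarith))

theorem abs_le_two_mul_center {k : ℕ} {y : ℝ} (hy : |y - center k| ≤ k) :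
    |y| ≤ 2 * center k := by
  have := natCast_le_center k
  have := center_pos k
  rw [abs_le] at hy ⊢
  constructor <;> linarith

theorem mass_mul_rpow_eq (p : ℝ) (k : ℕ) :
    mass k * (2 * center k) ^ p = 2 ^ p * (k ^ 6 * ((2 : ℝ) ^ (p - 3)) ^ k ^ 2) := by
  have hc := center_pos k
  rw [Real.rpow_pow_comm zero_le_two, ← center, Real.rpow_sub hc, Real.rpow_ofNat,
    Real.mul_rpow zero_le_two hc.le, mass]
  field_simp

theorem summable_mass_mul_rpow {p : ℝ} (hp : p < 3) :
    Summable fun k => mass k * (2 * center k) ^ p := by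
  have hr0 : (0 : ℝ) ≤ 2 ^ (p - 3) := by positivity
  have hr1 : (2 : ℝ) ^ (p - 3) < 1 := Real.rpow_lt_one_of_one_lt_of_neg one_lt_two (by linarith)
  have hgeom := summable_pow_mul_geometric_of_norm_lt_one 6
    (show ‖(2 : ℝ) ^ (p - 3)‖ < 1 by rwa [Real.norm_of_nonneg hr0])
  refine .of_nonneg_of_le (fun k => ?_) (fun k => ?_) (hgeom.mul_left (2 ^ p))
  · have := mass_nonneg k; have := center_pos k; positivity
  · rw [mass_mul_rpow_eq]
    refine mul_le_mul_of_nonneg_left (mul_le_mul_of_nonneg_left ?_ (by positivity)) (by positivity)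
    exact pow_le_pow_of_le_one hr0 hr1.le (Nat.le_self_pow two_ne_zero k)

theorem summable_mass : Summable mass := by
  simpa using summable_mass_mul_rpow (p := 0) (by norm_num)

def totalMass : ℝ := ∑' k, mass k

def weight (k : ℕ) : ℝ := mass k / (2 * totalMass)

def counterexample : Measure ℝ :=
  sumDiracPairs weight (fun k => center k - k) (fun k => center k + k)

theorem totalMass_pos : 0 < totalMass :=
  summable_mass.tsum_pos mass_nonneg 1 (by unfold mass; have := center_pos 1; positivity)

theorem weight_nonneg : 0 ≤ weight := fun k =>
  div_nonneg (mass_nonneg k) (mul_nonneg zero_le_two totalMass_pos.le)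

theorem hasSum_weight : HasSum weight (1 / 2) := by
  have h := summable_mass.hasSum.div_const (2 * totalMass)
  rwa [← totalMass, div_mul_cancel_right₀ totalMass_pos.ne', ← one_div] at h

instance : IsProbabilityMeasure counterexample :=
  isProbabilityMeasure_sumDiracPairs weight_nonneg hasSum_weight

theorem integrable_abs_rpow {p : ℝ} (hp0 : 0 ≤ p) (hp : p < 3) :
    Integrable (fun x : ℝ => |x| ^ p) counterexample := by
  refine integrable_sumDiracPairs weight_nonneg (.of_nonneg_of_le
    (fun k => mul_nonneg (weight_nonneg k) (by positivity)) (fun k => ?_)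
    ((summable_mass_mul_rpow hp).div_const totalMass))
  have hatom : ∀ y : ℝ, |y - center k| ≤ k → |(|y| ^ p)| ≤ (2 * center k) ^ p := fun y hy => by
    rw [abs_of_nonneg (by positivity)]
    exact Real.rpow_le_rpow (abs_nonneg y) (abs_le_two_mul_center hy) hp0
  have hl := hatom (center k - k) (by simp)
  have hr := hatom (center k + k) (by simp)
  calc weight k * (|(|center k - k| ^ p)| + |(|center k + k| ^ p)|)
      ≤ weight k * (2 * (2 * center k) ^ p) := by gcongr; exacts [weight_nonneg k, by linarith]
    _ = mass k * (2 * center k) ^ p / totalMass := by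
      unfold weight; field_simp [totalMass_pos.ne']

theorem integral_center_lt_integral_atom {t : ℝ} (ht : 0 < t) {K : ℕ} (hK : 4 ≤ K)
    (htK : 2 * t ≤ K) (hKS : 16 * totalMass < K) {x : ℝ}
    (hx : x = center K - K ∨ x = center K + K) :
    ∫ y, ((center K - y) ^ 2 + t ^ 2)⁻¹ ∂counterexample
      < ∫ y, ((x - y) ^ 2 + t ^ 2)⁻¹ ∂counterexample := by
  have hs : (4 : ℝ) ≤ K := by exact_mod_cast hK
  set c := center K
  set s : ℝ := (K : ℝ)
  have hc : 0 < c := center_pos K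
  have hxc : |x - c| ≤ s := by
    rcases hx with rfl | rfl <;> simp [abs_of_nonneg (by linarith : 0 ≤ s)]
  have hsum := (hasSum_integral_sumDiracPairs weight_nonneg
    (integrable_inv_sub_sq_add_sq (μ := counterexample) ht.ne' x)).sub
    (hasSum_integral_sumDiracPairs weight_nonneg
      (integrable_inv_sub_sq_add_sq (μ := counterexample) ht.ne' c))
  simp only [← mul_sub] at hsum
  have hpeak := mul_le_mul_of_nonneg_left (two_div_sq_le_inv_sq_add_sq_sub ht htK hx)
    (weight_nonneg K)
  have hfar : ∀ j ≠ K, -(32 * s / c ^ 3 * weight j) ≤ weight j *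
      ((((x - (center j - j)) ^ 2 + t ^ 2)⁻¹ + ((x - (center j + j)) ^ 2 + t ^ 2)⁻¹)
        - (((c - (center j - j)) ^ 2 + t ^ 2)⁻¹ + ((c - (center j + j)) ^ 2 + t ^ 2)⁻¹)) := by
    intro j hj
    have hl := inv_sq_add_sq_sub_le_of_far t hc hxc
      (le_abs_sub_center hK hj (y := center j - j) (by simp))
    have hr := inv_sq_add_sq_sub_le_of_far t hc hxc
      (le_abs_sub_center hK hj (y := center j + j) (by simp))
    rw [show -(32 * s / c ^ 3 * weight j) = weight j * -(16 * s / c ^ 3 + 16 * s / c ^ 3) by ring]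
    exact mul_le_mul_of_nonneg_left (by linarith) (weight_nonneg j)
  have hgain : weight K * (2 / s ^ 2) - 32 * s / c ^ 3 * (1 / 2) ≤
      (∫ y, ((x - y) ^ 2 + t ^ 2)⁻¹ ∂counterexample)
        - ∫ y, ((c - y) ^ 2 + t ^ 2)⁻¹ ∂counterexample :=
    sub_mul_le_of_hasSum hsum hasSum_weight K (by positivity) (weight_nonneg K) hpeak hfar
  have hweight : weight K * (2 / s ^ 2) = s ^ 4 / (c ^ 3 * totalMass) := by
    change s ^ 6 / c ^ 3 / (2 * totalMass) * (2 / s ^ 2) = _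
    field_simp [totalMass_pos.ne']
  have hpos : 32 * s / c ^ 3 * (1 / 2) < s ^ 4 / (c ^ 3 * totalMass) := by
    rw [div_mul_eq_mul_div, div_lt_div_iff₀ (by positivity) (by positivity [totalMass_pos])]
    have hcube : 16 * totalMass < s ^ 3 := by nlinarith
    nlinarith [mul_lt_mul_of_pos_left hcube (by positivity : 0 < s * c ^ 3)]
  linarith

end

end CauchyNeverUnimodal

open CauchyNeverUnimodal in
theorem exists_measure_moments_below_three_cauchy_convolution_never_unimodal :
    ∃ μ : Measure ℝ, IsProbabilityMeasure μ ∧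
      (∀ p : ℝ, 0 < p → p < 3 → Integrable (fun x : ℝ => |x| ^ p) μ) ∧
      (∀ t : ℝ, 0 < t →
        ¬ Unimodal (fun x => ∫ y, ((x - y) ^ 2 + t ^ 2)⁻¹ ∂μ)) := by
  refine ⟨counterexample, inferInstance, fun p hp0 hp => integrable_abs_rpow hp0.le hp,
    fun t ht => ?_⟩
  obtain ⟨K, hK⟩ := exists_nat_gt (max (max 4 (2 * t)) (16 * totalMass))
  obtain ⟨⟨hK4, htK⟩, hKS⟩ := by simpa only [max_lt_iff] using hK
  have hK0 : (0 : ℝ) < K := by linarith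
  have hK4 : 4 ≤ K := by exact_mod_cast hK4.le
  exact not_unimodal_of_lt_of_lt_s9 (sub_lt_self _ hK0) (lt_add_of_pos_right _ hK0)
    (integral_center_lt_integral_atom ht hK4 htK.le hKS (.inl rfl))
    (integral_center_lt_integral_atom ht hK4 htK.le hKS (.inr rfl))
end

section
/- For t > 0, the function h_t : ℝ → ℝ defined by h_t(x) = ((x-1)² + t²)⁻¹ + ((x+1)² + t²)⁻¹ is unimodal if and only if t ≥ √3. -/
open MeasureTheory Real Set Filter Topology

/-!
The density `h_t` is even, and `h_t'(x) = -4x q(x) / (A² B²)` with `A = (x - 1)² + t²`,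
`B = (x + 1)² + t²` and `q(x) = x⁴ + 2(t² + 1)x² + (t² + 1)(t² - 3)`. If `t² ≥ 3` then `q ≥ 0`, so `h_t` increases up to
`0` and decreases after it. If `t² < 3` then `h_t(ε) - h_t(0) = 2ε²(3 - t² - ε²) / (…) > 0` for
small `ε ≠ 0`, so `0` is a strict local minimum between the equal values `h_t(±ε)`, which a
unimodal function cannot have.
-/

theorem Unimodal.min_le {f : ℝ → ℝ} (hf : Unimodal f) {x y z : ℝ} (hxy : x ≤ y) (hyz : y ≤ z) :
    min (f x) (f z) ≤ f y := by
  obtain ⟨a, hmono, hanti⟩ := hf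
  rcases le_total a y with hay | hya
  · exact (min_le_right _ _).trans (hanti hay (hay.trans hyz) hyz)
  · exact (min_le_left _ _).trans (hmono ((hxy.trans hya) : x ≤ a) hya hxy)

theorem unimodal_of_mul_deriv_nonpos {f : ℝ → ℝ} (hf : Differentiable ℝ f) (a : ℝ)
    (h : ∀ x, (x - a) * deriv f x ≤ 0) : Unimodal f := by
  refine ⟨a, monotoneOn_of_deriv_nonneg (convex_Iic a) hf.continuous.continuousOn
    hf.differentiableOn fun x hx => ?_, antitoneOn_of_deriv_nonpos (convex_Ici a)
    hf.continuous.continuousOn hf.differentiableOn fun x hx => ?_⟩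
  · rw [interior_Iic] at hx
    exact nonneg_of_mul_nonpos_right (h x) (sub_neg.2 hx)
  · rw [interior_Ici] at hx
    exact nonpos_of_mul_nonpos_right (h x) (sub_pos.2 hx)

noncomputable def bernoulliCauchyDensity (t x : ℝ) : ℝ :=
  ((x - 1) ^ 2 + t ^ 2)⁻¹ + ((x + 1) ^ 2 + t ^ 2)⁻¹

namespace bernoulliCauchyDensity

variable {t : ℝ}

theorem neg (x : ℝ) : bernoulliCauchyDensity t (-x) = bernoulliCauchyDensity t x := by
  unfold bernoulliCauchyDensity
  ring

theorem apply_sub_apply_zero (ht : t ≠ 0) (x : ℝ) :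
    bernoulliCauchyDensity t x - bernoulliCauchyDensity t 0 =
      2 * x ^ 2 * (3 - t ^ 2 - x ^ 2) /
        (((x - 1) ^ 2 + t ^ 2) * ((x + 1) ^ 2 + t ^ 2) * (1 + t ^ 2)) := by
  have hA : (x - 1) ^ 2 + t ^ 2 ≠ 0 := by positivity
  have hB : (x + 1) ^ 2 + t ^ 2 ≠ 0 := by positivity
  have hC : 1 + t ^ 2 ≠ 0 := by positivity
  unfold bernoulliCauchyDensity
  field_simp
  ring

theorem hasDerivAt (ht : t ≠ 0) (x : ℝ) :
    HasDerivAt (bernoulliCauchyDensity t)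
      (-4 * x * (x ^ 4 + 2 * (t ^ 2 + 1) * x ^ 2 + (t ^ 2 + 1) * (t ^ 2 - 3)) /
        (((x - 1) ^ 2 + t ^ 2) ^ 2 * ((x + 1) ^ 2 + t ^ 2) ^ 2)) x := by
  have hA : (x - 1) ^ 2 + t ^ 2 ≠ 0 := by positivity
  have hB : (x + 1) ^ 2 + t ^ 2 ≠ 0 := by positivity
  have hA' : HasDerivAt (fun x : ℝ => (x - 1) ^ 2 + t ^ 2) (2 * (x - 1)) x := by
    simpa using (((hasDerivAt_id x).sub_const 1).pow 2).add_const (t ^ 2)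
  have hB' : HasDerivAt (fun x : ℝ => (x + 1) ^ 2 + t ^ 2) (2 * (x + 1)) x := by
    simpa using (((hasDerivAt_id x).add_const 1).pow 2).add_const (t ^ 2)
  refine ((hA'.inv hA).add (hB'.inv hB)).congr_deriv ?_
  field_simp
  ring

theorem unimodal (h : 3 ≤ t ^ 2) : Unimodal (bernoulliCauchyDensity t) := by
  have ht : t ≠ 0 := by rintro rfl; norm_num at h
  refine unimodal_of_mul_deriv_nonpos (fun x => (hasDerivAt ht x).differentiableAt) 0
    fun x => ?_
  have hq : 0 ≤ x ^ 4 + 2 * (t ^ 2 + 1) * x ^ 2 + (t ^ 2 + 1) * (t ^ 2 - 3) := by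
    have : 0 ≤ t ^ 2 - 3 := by linarith
    positivity
  rw [(hasDerivAt ht x).deriv, sub_zero, ← mul_div_assoc]
  refine div_nonpos_of_nonpos_of_nonneg ?_ (by positivity)
  nlinarith [mul_nonneg (sq_nonneg x) hq]

theorem not_unimodal (ht : t ≠ 0) (h : t ^ 2 < 3) : ¬Unimodal (bernoulliCauchyDensity t) := by
  intro hu
  set ε := √((3 - t ^ 2) / 2)
  have hε : 0 < ε := sqrt_pos.2 (by linarith)
  have hε2 : ε ^ 2 = (3 - t ^ 2) / 2 := sq_sqrt (by linarith)
  have hlt : bernoulliCauchyDensity t 0 < bernoulliCauchyDensity t ε := by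
    rw [← sub_pos, apply_sub_apply_zero ht]
    refine div_pos ?_ (by positivity)
    nlinarith
  have hle := hu.min_le (neg_nonpos.2 hε.le) hε.le
  rw [neg, min_self] at hle
  exact hle.not_gt hlt

end bernoulliCauchyDensity

theorem bernoulli_cauchy_convolution_unimodal_iff (t : ℝ) (ht : 0 < t) :
    Unimodal (fun x : ℝ =>
      ((x - 1) ^ 2 + t ^ 2)⁻¹ + ((x + 1) ^ 2 + t ^ 2)⁻¹) ↔ Real.sqrt 3 ≤ t := by
  change Unimodal (bernoulliCauchyDensity t) ↔ _
  rw [sqrt_le_left ht.le]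
  exact ⟨fun hu => not_lt.1 fun h => bernoulliCauchyDensity.not_unimodal ht.ne' h hu,
    bernoulliCauchyDensity.unimodal⟩
end

section
/- Let (w_n)_{n≥1} be positive reals with ∑_{n≥1} w_n = 1 and let (a_n)_{n≥1} be a sequence of reals. For each k set b_k := inf_{n≠k} |a_k - a_n - 1|, and assume that w_k·b_k³ → ∞ as k → ∞. Then ∑_{n≥1} w_n·|a_n|³ = ∞ (the series diverges); that is, the measure μ = ∑_{n≥1} w_n·δ_{a_n} has infinite absolute third moment. -/
open MeasureTheory Real Set Filter Topology

/-!
Comparing with the single index `0`, the triangle inequality gives `b k ≤ |a k| + |a 0| + 1`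
for `k ≠ 0`, so `w k * b k ^ 3 ≤ 4 * (w k * |a k| ^ 3 + (|a 0| + 1) ^ 3 * w k)`. If the third
moment were finite, both terms on the right would tend to `0`, contradicting `w k * b k ^ 3 → ∞`.
-/

lemma sInf_abs_sub_sub_one_le {ι : Type*} (a : ι → ℝ) {j k : ι} (hjk : j ≠ k) :
    sInf {r : ℝ | ∃ n, n ≠ k ∧ r = |a k - a n - 1|} ≤ |a k| + (|a j| + 1) := by
  have hbdd : BddBelow {r : ℝ | ∃ n, n ≠ k ∧ r = |a k - a n - 1|} :=
    ⟨0, by rintro _ ⟨n, -, rfl⟩; exact abs_nonneg _⟩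
  calc sInf {r : ℝ | ∃ n, n ≠ k ∧ r = |a k - a n - 1|} ≤ |a k - a j - 1| :=
        csInf_le hbdd ⟨j, hjk, rfl⟩
    _ ≤ |a k - a j| + 1 := by simpa using abs_sub (a k - a j) 1
    _ ≤ |a k| + (|a j| + 1) := by linarith [abs_sub (a k) (a j)]

lemma tendsto_mul_add_pow_three_nhds_zero {α : Type*} {l : Filter α} {w x : α → ℝ} {C : ℝ}
    (hw : ∀ i, 0 ≤ w i) (hx : ∀ i, 0 ≤ x i) (hC : 0 ≤ C)
    (hw0 : Tendsto w l (𝓝 0)) (hwx : Tendsto (fun i => w i * x i ^ 3) l (𝓝 0)) :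
    Tendsto (fun i => w i * (x i + C) ^ 3) l (𝓝 0) := by
  have hbound : Tendsto (fun i => 4 * (w i * x i ^ 3 + C ^ 3 * w i)) l (𝓝 0) := by
    simpa using (hwx.add (hw0.const_mul (C ^ 3))).const_mul 4
  refine squeeze_zero (fun i => by have := hw i; have := hx i; positivity) (fun i => ?_) hbound
  calc w i * (x i + C) ^ 3 ≤ w i * (4 * (x i ^ 3 + C ^ 3)) :=
        mul_le_mul_of_nonneg_left ((add_pow_le (hx i) hC 3).trans_eq (by norm_num)) (hw i)
    _ = 4 * (w i * x i ^ 3 + C ^ 3 * w i) := by ring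

theorem third_moment_infinite_of_fast_growth
    (w a b : ℕ → ℝ) (hw : ∀ n, 0 < w n) (hsum : ∑' n, w n = 1)
    (hb : ∀ k, b k = sInf {r : ℝ | ∃ n, n ≠ k ∧ r = |a k - a n - 1|})
    (hbtop : Tendsto (fun k => w k * b k ^ 3) atTop atTop) :
    ¬ Summable (fun n => w n * |a n| ^ 3) := by
  intro hmoment
  have hw_summable : Summable w := by
    by_contra h
    simp [tsum_eq_zero_of_not_summable h] at hsum
  have hbound : Tendsto (fun k => w k * (|a k| + (|a 0| + 1)) ^ 3) atTop (𝓝 0) :=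
    tendsto_mul_add_pow_three_nhds_zero (fun n => (hw n).le) (fun n => abs_nonneg _)
      (by positivity) hw_summable.tendsto_atTop_zero hmoment.tendsto_atTop_zero
  refine not_tendsto_atTop_of_tendsto_nhds hbound (tendsto_atTop_mono' _ ?_ hbtop)
  filter_upwards [eventually_ne_atTop 0] with k hk
  have hb0 : 0 ≤ b k := hb k ▸ Real.sInf_nonneg (by rintro _ ⟨n, -, rfl⟩; exact abs_nonneg _)
  have hwk : 0 ≤ w k := (hw k).le
  gcongr
  exact hb k ▸ sInf_abs_sub_sub_one_le a hk.symm
end
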